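/- arXiv:1502.07025 — 8 statements merged into one kernel-verified Lean document; each statement's English description precedes it below -/
import Mathlib

section
/- Let g be a finite-dimensional Lie algebra with a Z-grading and a nondegenerate invariant symmetric bilinear form κ such that κ(g_i, g_j) = 0 whenever i + j ≠ 0. Let e ∈ g_2. Then ad e : g_j → g_{j+2} is injective for all j ≤ -1 if and only if ad e : g_j → g_{j+2} is surjective for all j ≥ -1. -/
open Module

/-- If a bilinear pairing between finite-dimensional spaces is separating on both sides, and a
subspace `U` has trivial right-annihilator, then `U` is the whole space. -/
lemma aux_perfect {K V W : Type*} [Field K] [AddCommGroup V] [Module K V]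
    [AddCommGroup W] [Module K W] [FiniteDimensional K V] [FiniteDimensional K W]
    (B : V →ₗ[K] W →ₗ[K] K)
    (hl : ∀ v, (∀ w, B v w = 0) → v = 0)
    (hr : ∀ w, (∀ v, B v w = 0) → w = 0)
    (U : Submodule K V) (hU : ∀ w, (∀ u ∈ U, B u w = 0) → w = 0) : U = ⊤ := by
  have hBinj : Function.Injective B := by
    refine (injective_iff_map_eq_zero B).2 fun v hv => hl v fun w => ?_
    rw [hv]; rfl
  have hFinj : Function.Injective B.flip := by
    refine (injective_iff_map_eq_zero B.flip).2 fun w hw => hr w fun v => ?_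
    have : B.flip w v = 0 := by rw [hw]; rfl
    simpa using this
  have h1 : finrank K V ≤ finrank K W := by
    have := LinearMap.finrank_le_finrank_of_injective hBinj
    rwa [Subspace.dual_finrank_eq] at this
  have h2 : finrank K W ≤ finrank K V := by
    have := LinearMap.finrank_le_finrank_of_injective hFinj
    rwa [Subspace.dual_finrank_eq] at this
  have heq : finrank K W = finrank K (Dual K V) := by
    rw [Subspace.dual_finrank_eq]; omega
  have hFsurj : Function.Surjective B.flip :=
    (LinearMap.injective_iff_surjective_of_finrank_eq_finrank heq).1 hFinj
  have hann : U.dualAnnihilator = ⊥ := by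
    rw [eq_bot_iff]
    intro φ hφ
    obtain ⟨w, rfl⟩ := hFsurj φ
    have hw : w = 0 := hU w fun u hu => (Submodule.mem_dualAnnihilator _).mp hφ u hu
    simp [hw]
  exact Subspace.dualAnnihilator_inj.mp (hann.trans Submodule.dualAnnihilator_top.symm)

/-- Let `g` be a finite-dimensional ℤ-graded Lie algebra with a nondegenerate invariant
symmetric bilinear form `κ` pairing `g i` with `g (-i)`, and let `e ∈ g 2`. Then
`ad e : g j → g (j+2)` is injective for all `j ≤ -1` iff it is surjective for all `j ≥ -1`. -/
theorem stmt_4 {K L : Type*} [Field K] [LieRing L] [LieAlgebra K L] [Module.Finite K L]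
    (G : ℤ → Submodule K L) (hdecomp : DirectSum.IsInternal G)
    (hbr : ∀ i j : ℤ, ∀ x ∈ G i, ∀ y ∈ G j, ⁅x, y⁆ ∈ G (i + j))
    (κ : L →ₗ[K] L →ₗ[K] K)
    (hsymm : ∀ x y, κ x y = κ y x)
    (hinv : ∀ x y z, κ ⁅x, y⁆ z = κ x ⁅y, z⁆)
    (hnd : ∀ x, (∀ y, κ x y = 0) → x = 0)
    (hpair : ∀ i j : ℤ, i + j ≠ 0 → ∀ x ∈ G i, ∀ y ∈ G j, κ x y = 0)
    (e : L) (he : e ∈ G 2) :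
    (∀ j : ℤ, j ≤ -1 → ∀ x ∈ G j, ⁅e, x⁆ = 0 → x = 0) ↔
      (∀ j : ℤ, -1 ≤ j → ∀ y ∈ G (j + 2), ∃ x ∈ G j, ⁅e, x⁆ = y) := by
  have htop : ⨆ i, G i = ⊤ := hdecomp.submodule_iSup_eq_top
  -- separation: an element of `G k` orthogonal to `G (-k)` is zero
  have sep : ∀ k : ℤ, ∀ x ∈ G k, (∀ y ∈ G (-k), κ x y = 0) → x = 0 := by
    intro k x hx h
    apply hnd
    intro y
    have hle : (⊤ : Submodule K L) ≤ LinearMap.ker (κ x) := by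
      rw [← htop]
      refine iSup_le fun i z hz => ?_
      rcases eq_or_ne i (-k) with rfl | hne
      · exact h z hz
      · exact hpair k i (by omega) x hx z hz
    exact hle Submodule.mem_top
  have sep' : ∀ k : ℤ, ∀ y ∈ G (-k), (∀ x ∈ G k, κ x y = 0) → y = 0 := by
    intro k y hy h
    refine sep (-k) y hy fun z hz => ?_
    rw [neg_neg] at hz
    rw [hsymm]
    exact h z hz
  constructor
  · -- injectivity for j ≤ -1 implies surjectivity for j ≥ -1
    intro hinj j hj y hy
    -- the image of ad e : G j → G (j+2), as a subspace of G (j+2)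
    let U : Submodule K ↥(G (j + 2)) :=
      { carrier := {w | ∃ x ∈ G j, ⁅e, x⁆ = ↑w}
        add_mem' := by
          rintro a b ⟨x₁, hx₁, hx₁'⟩ ⟨x₂, hx₂, hx₂'⟩
          exact ⟨x₁ + x₂, add_mem hx₁ hx₂, by simp [lie_add, hx₁', hx₂']⟩
        zero_mem' := ⟨0, zero_mem _, by simp⟩
        smul_mem' := by
          rintro c a ⟨x, hx, hx'⟩
          exact ⟨c • x, Submodule.smul_mem _ c hx, by simp [lie_smul, hx']⟩ }
    -- the pairing between G (j+2) and G (-(j+2))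
    let B : ↥(G (j + 2)) →ₗ[K] ↥(G (-(j + 2))) →ₗ[K] K :=
      (κ.comp (G (j + 2)).subtype).compl₂ (G (-(j + 2))).subtype
    have hB : ∀ (v : ↥(G (j + 2))) (w : ↥(G (-(j + 2)))), B v w = κ ↑v ↑w := fun _ _ => rfl
    have hUtop : U = ⊤ := by
      refine aux_perfect B (fun v hv => ?_) (fun w hw => ?_) U (fun w hw => ?_)
      · ext
        refine sep (j + 2) v.1 v.2 fun z hz => ?_
        exact hv ⟨z, hz⟩
      · ext
        refine sep' (j + 2) w.1 w.2 fun z hz => ?_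
        exact hw ⟨z, hz⟩
      · -- trivial annihilator of the image, using injectivity at -(j+2)
        have hmem : ⁅e, (w : L)⁆ ∈ G (-j) := by
          have := hbr 2 (-(j + 2)) e he w.1 w.2
          rwa [show (2 : ℤ) + -(j + 2) = -j by ring] at this
        have hzero : ⁅e, (w : L)⁆ = 0 := by
          refine sep (-j) _ hmem fun z hz => ?_
          rw [neg_neg] at hz
          have hlie : ⁅e, z⁆ ∈ G (j + 2) := by
            have := hbr 2 j e he z hz
            rwa [show (2 : ℤ) + j = j + 2 by ring] at this
          have h1 : κ ⁅e, z⁆ ↑w = 0 := by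
            have := hw ⟨⁅e, z⁆, hlie⟩ ⟨z, hz, rfl⟩
            simpa [hB] using this
          rw [hsymm]
          have h2 : κ z ⁅e, (w : L)⁆ = -κ ⁅e, z⁆ ↑w := by
            rw [← lie_skew e z, map_neg, LinearMap.neg_apply, neg_neg, hinv]
          rw [h2, h1, neg_zero]
        have hw0 : (w : L) = 0 :=
          hinj (-(j + 2)) (by omega) w.1 w.2 hzero
        exact Subtype.ext hw0
    have : (⟨y, hy⟩ : ↥(G (j + 2))) ∈ U := hUtop ▸ Submodule.mem_top
    obtain ⟨x, hx, hx'⟩ := this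
    exact ⟨x, hx, hx'⟩
  · -- surjectivity for j ≥ -1 implies injectivity for j ≤ -1
    intro hsurj j hj x hx hx0
    refine sep j x hx fun z hz => ?_
    have hz' : z ∈ G ((-j - 2) + 2) := by rwa [show (-j - 2) + 2 = -j by ring]
    obtain ⟨x', hx', hx''⟩ := hsurj (-j - 2) (by omega) z hz'
    rw [← hx'']
    calc κ x ⁅e, x'⁆ = κ ⁅x, e⁆ x' := (hinv x e x').symm
      _ = -κ ⁅e, x⁆ x' := by rw [← lie_skew x e, map_neg, LinearMap.neg_apply]
      _ = 0 := by rw [hx0]; simp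
end

section
/- Let g be a finite-dimensional Z-graded Lie algebra with a good grading for the nilpotent element e ∈ g_2 (ad e injective on g_j for j ≤ -1 and surjective onto g_{j+2} for j ≥ -1). Then dim z(e) = dim g_0 + dim g_1, where z(e) is the centralizer of e. -/
open Module DirectSum

/-- For a good ℤ-grading for `e ∈ g 2` in a finite-dimensional Lie algebra, the dimension
of the centralizer of `e` equals `dim g 0 + dim g 1`. -/
theorem stmt_6 {K L : Type*} [Field K] [LieRing L] [LieAlgebra K L] [Module.Finite K L]
    (G : ℤ → Submodule K L) (hdecomp : DirectSum.IsInternal G)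
    (hbr : ∀ i j : ℤ, ∀ x ∈ G i, ∀ y ∈ G j, ⁅x, y⁆ ∈ G (i + j))
    (e : L) (he : e ∈ G 2)
    (hinj : ∀ j : ℤ, j ≤ -1 → ∀ x ∈ G j, ⁅e, x⁆ = 0 → x = 0)
    (hsurj : ∀ j : ℤ, -1 ≤ j → ∀ y ∈ G (j + 2), ∃ x ∈ G j, ⁅e, x⁆ = y) :
    Module.finrank K (LinearMap.ker (LieAlgebra.ad K L e)) =
      Module.finrank K (G 0) + Module.finrank K (G 1) := by
  classical
  letI dec : DirectSum.Decomposition G := hdecomp.chooseDecomposition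
  set f : L →ₗ[K] L := LieAlgebra.ad K L e with hf
  have hfapp : ∀ x : L, f x = ⁅e, x⁆ := fun x => rfl
  have hle : ∀ (S : Set ℤ) (j : ℤ), j ∈ S → G j ≤ ⨆ k ∈ S, G k := fun S j hj =>
    le_iSup₂ (f := fun k (_ : k ∈ S) => G k) j hj
  -- if all graded components of `x` vanish, then `x = 0`
  have hzero : ∀ x : L, (∀ i : ℤ, (DirectSum.decompose G x i : L) = 0) → x = 0 := by
    intro x hx
    rw [← DirectSum.sum_support_decompose G x]
    exact Finset.sum_eq_zero fun i _ => hx i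
  -- membership in a graded biSup bounds the support of the decomposition
  have hsupp : ∀ (S : Set ℤ) (x : L), x ∈ (⨆ j ∈ S, G j) →
      ∀ i, i ∉ S → (DirectSum.decompose G x i : L) = 0 := by
    intro S x hx i hi
    have hker : (⨆ j ∈ S, G j) ≤ LinearMap.ker ((G i).subtype ∘ₗ
        (DFinsupp.lapply i : (⨁ j, G j) →ₗ[K] G i) ∘ₗ
        (DirectSum.decomposeLinearEquiv G).toLinearMap) := by
      refine iSup₂_le fun j hj y hy => ?_
      have hji : j ≠ i := fun h => hi (h ▸ hj)
      simp only [LinearMap.mem_ker, LinearMap.comp_apply, LinearEquiv.coe_coe,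
        DirectSum.decomposeLinearEquiv_apply, DFinsupp.lapply_apply, Submodule.coe_subtype]
      exact DirectSum.decompose_of_mem_ne G hy hji
    have := hker hx
    simpa only [LinearMap.mem_ker, LinearMap.comp_apply, LinearEquiv.coe_coe,
      DirectSum.decomposeLinearEquiv_apply, DFinsupp.lapply_apply,
      Submodule.coe_subtype] using this
  -- disjointness of graded pieces over disjoint index sets
  have hdisj : ∀ S T : Set ℤ, (∀ i, i ∈ S → i ∉ T) →
      Disjoint (⨆ j ∈ S, G j) (⨆ j ∈ T, G j) := by
    intro S T hST
    rw [Submodule.disjoint_def]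
    intro x hxS hxT
    refine hzero x fun i => ?_
    by_cases hiS : i ∈ S
    · exact hsupp T x hxT i (hST i hiS)
    · exact hsupp S x hxS i hiS
  -- the component of ⁅e, x⁆ in degree 2 + i is the bracket with the degree i component of x
  have hcomp : ∀ (i : ℤ) (x : L),
      (DirectSum.decompose G ⁅e, x⁆ (2 + i) : L) = ⁅e, (DirectSum.decompose G x i : L)⁆ := by
    intro i
    refine DirectSum.Decomposition.inductionOn G ?_ ?_ ?_
    · simp
    · intro j m
      by_cases hji : j = i
      · subst hji
        rw [DirectSum.decompose_of_mem_same G m.2, DirectSum.decompose_of_mem_same G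
          (hbr 2 j e he m m.2)]
      · rw [DirectSum.decompose_of_mem_ne G m.2 hji,
          DirectSum.decompose_of_mem_ne G (hbr 2 j e he m m.2)
            (fun h => hji (by omega)), lie_zero]
    · intro m m' hm hm'
      rw [lie_add, DirectSum.decompose_add, DirectSum.decompose_add]
      push_cast [DirectSum.add_apply]
      rw [hm, hm', lie_add]
  -- named graded pieces
  set Nneg : Submodule K L := ⨆ j ∈ {j : ℤ | j ≤ -1}, G j with hNneg
  set Mnn : Submodule K L := ⨆ j ∈ {j : ℤ | 0 ≤ j}, G j with hMnn
  set Npos : Submodule K L := ⨆ j ∈ {j : ℤ | 2 ≤ j}, G j with hNpos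
  -- the whole space splits
  have htop : Nneg ⊔ Mnn = ⊤ := by
    rw [← hdecomp.submodule_iSup_eq_top]
    refine le_antisymm (sup_le (iSup₂_le fun j _ => le_iSup G j)
      (iSup₂_le fun j _ => le_iSup G j)) (iSup_le fun j => ?_)
    by_cases hj : 0 ≤ j
    · exact le_trans (hle {k : ℤ | 0 ≤ k} j hj) le_sup_right
    · exact le_trans (hle {k : ℤ | k ≤ -1} j (by simp only [Set.mem_setOf_eq]; omega)) le_sup_left
  -- the nonnegative part splits
  have hMsplit : Mnn = (G 0 ⊔ G 1) ⊔ Npos := by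
    refine le_antisymm (iSup₂_le fun j hj => ?_) ?_
    · have hj' : (0 : ℤ) ≤ j := hj
      rcases eq_or_ne j 0 with h0 | h0
      · exact h0 ▸ le_trans le_sup_left le_sup_left
      rcases eq_or_ne j 1 with h1 | h1
      · exact h1 ▸ le_trans le_sup_right le_sup_left
      · exact le_trans (hle {k : ℤ | 2 ≤ k} j (by simp only [Set.mem_setOf_eq]; omega)) le_sup_right
    · refine sup_le (sup_le ?_ ?_) (iSup₂_le fun j hj => ?_)
      · exact hle {k : ℤ | 0 ≤ k} 0 (by simp only [Set.mem_setOf_eq]; omega)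
      · exact hle {k : ℤ | 0 ≤ k} 1 (by simp only [Set.mem_setOf_eq]; omega)
      · have hj' : (2 : ℤ) ≤ j := hj
        exact hle {k : ℤ | 0 ≤ k} j (by simp only [Set.mem_setOf_eq]; omega)
  -- f is injective on Nneg
  have hinjN : ∀ x ∈ Nneg, f x = 0 → x = 0 := by
    intro x hx hfx
    refine hzero x fun i => ?_
    by_cases hi : i ≤ -1
    · refine hinj i hi _ (DirectSum.decompose G x i).2 ?_
      rw [hfapp] at hfx
      rw [← hcomp i x, hfx]
      simp
    · exact hsupp {j : ℤ | j ≤ -1} x hx i (show ¬ (i ≤ -1) from hi)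
  -- f maps Mnn onto Npos
  have hmapM : Submodule.map f Mnn = Npos := by
    refine le_antisymm ?_ ?_
    · rw [hMnn, Submodule.map_iSup]
      refine iSup_le fun j => ?_
      rw [Submodule.map_iSup]
      refine iSup_le fun hj => ?_
      rintro y ⟨x, hx, rfl⟩
      have hj' : (0 : ℤ) ≤ j := hj
      have hmem : f x ∈ G (2 + j) := hbr 2 j e he x hx
      exact hle {k : ℤ | 2 ≤ k} (2 + j) (by simp only [Set.mem_setOf_eq]; omega) hmem
    · refine iSup₂_le fun j hj y hy => ?_
      have hj2 : (2 : ℤ) ≤ j := hj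
      have hy' : y ∈ G ((j - 2) + 2) := by rwa [show j - 2 + 2 = j by omega]
      obtain ⟨x, hx, hxy⟩ := hsurj (j - 2) (by omega) y hy'
      exact ⟨x, hle {k : ℤ | 0 ≤ k} (j - 2) (by simp only [Set.mem_setOf_eq]; omega) hx,
        by rw [hfapp, hxy]⟩
  -- f maps Nneg into degrees ≤ 1
  have hmapN : Submodule.map f Nneg ≤ ⨆ j ∈ {j : ℤ | j ≤ 1}, G j := by
    rw [hNneg, Submodule.map_iSup]
    refine iSup_le fun j => ?_
    rw [Submodule.map_iSup]
    refine iSup_le fun hj => ?_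
    rintro y ⟨x, hx, rfl⟩
    have hj' : j ≤ -1 := hj
    have hmem : f x ∈ G (2 + j) := hbr 2 j e he x hx
    exact hle {k : ℤ | k ≤ 1} (2 + j) (by simp only [Set.mem_setOf_eq]; omega) hmem
  -- range of f
  have hrange : LinearMap.range f = Submodule.map f Nneg ⊔ Npos := by
    rw [← Submodule.map_top, ← htop, Submodule.map_sup, hmapM]
  -- dimension bookkeeping
  have hd1 : Disjoint Nneg Mnn :=
    hdisj _ _ (fun i (h1 : i ≤ -1) (h2 : 0 ≤ i) => by omega)
  have hd2 : Disjoint (G 0 ⊔ G 1) Npos := by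
    refine Disjoint.mono_left ?_
      (hdisj {j : ℤ | j ≤ 1} _ (fun i (h1 : i ≤ 1) (h2 : 2 ≤ i) => by omega))
    exact sup_le (hle {k : ℤ | k ≤ 1} 0 (by simp only [Set.mem_setOf_eq]; omega))
      (hle {k : ℤ | k ≤ 1} 1 (by simp only [Set.mem_setOf_eq]; omega))
  have hd3 : Disjoint (G 0) (G 1) := by
    refine Disjoint.mono (hle {k : ℤ | k ≤ 0} 0 (by simp only [Set.mem_setOf_eq]; omega))
      (hle {k : ℤ | k = 1} 1 (by simp only [Set.mem_setOf_eq])) ?_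
    exact hdisj {j : ℤ | j ≤ 0} {j : ℤ | j = 1} (fun i (h1 : i ≤ 0) (h2 : i = 1) => by omega)
  have hd4 : Disjoint (Submodule.map f Nneg) Npos :=
    Disjoint.mono_left hmapN
      (hdisj {j : ℤ | j ≤ 1} _ (fun i (h1 : i ≤ 1) (h2 : 2 ≤ i) => by omega))
  have hplus : ∀ s t : Submodule K L, Disjoint s t →
      finrank K ↥(s ⊔ t) = finrank K s + finrank K t := by
    intro s t hst
    have := Submodule.finrank_sup_add_finrank_inf_eq s t
    rw [disjoint_iff.mp hst, finrank_bot, add_zero] at this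
    exact this
  -- dim (map f Nneg) = dim Nneg
  have hinjdim : finrank K ↥(Submodule.map f Nneg) = finrank K ↥Nneg := by
    set g : ↥Nneg →ₗ[K] L := f ∘ₗ Nneg.subtype with hg
    have hrg : LinearMap.range g = Submodule.map f Nneg := by
      rw [hg, LinearMap.range_comp, Submodule.range_subtype]
    have hkg : LinearMap.ker g = ⊥ := by
      rw [LinearMap.ker_eq_bot']
      intro m hm
      have : (m : L) = 0 := hinjN m m.2 hm
      exact Subtype.ext this
    have := LinearMap.finrank_range_add_finrank_ker g
    rw [hrg, hkg, finrank_bot, add_zero] at this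
    exact this
  -- put all dimensions together
  have htotal : finrank K L = finrank K ↥Nneg + (finrank K ↥(G 0) + finrank K ↥(G 1)
      + finrank K ↥Npos) := by
    rw [← finrank_top K L, ← htop, hplus _ _ hd1, hMsplit, hplus _ _ hd2, hplus _ _ hd3]
  have hrankdim : finrank K ↥(LinearMap.range f) = finrank K ↥Nneg + finrank K ↥Npos := by
    rw [hrange, hplus _ _ hd4, hinjdim]
  have hrn := LinearMap.finrank_range_add_finrank_ker f
  rw [hrankdim, htotal] at hrn
  omega
end

section
/- Let {e, h, f} be an sl2-triple in a finite-dimensional semisimple Lie algebra g over an algebraically closed field of characteristic zero. Then g = z(f) ⊕ [g, e] as vector spaces, where z(f) = ker(ad f) and [g,e] = range(ad e). -/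
/-!
Write `E`, `H`, `F` for the actions of `e`, `h`, `f`. By a dimension count it suffices that
`ker F ∩ im E = 0` and, for the triple `(-h, f, e)`, that `ker E ∩ im F = 0`. If `ker F ∩ im E` is
nonzero, this `H`-stable subspace contains an `H`-eigenvector `x = E y`. As a lowest weight vector,
`x` has weight `-n` with `n ∈ ℕ`, and `y` may be taken in the generalized `(-n - 2)`-eigenspace.
Then `E F^(k+1) y = (k + 1) (H + k) F^k y`, where `H + k` is invertible on the generalized
`(-n - 2 - 2k)`-eigenspace, so no `F^k y` vanishes and `H` would have infinitely many eigenvalues.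
-/

open LieModule Module

section Ring

variable {A : Type*} [Ring A] {h e f : A}

theorem pow_mul_eq_of_mul_sub_mul_eq (hhf : h * f - f * h = -(2 • f)) (k : ℕ) :
    f ^ k * h = h * f ^ k + (2 * k) • f ^ k := by
  have hfh : f * h = h * f + 2 • f := by
    rw [← neg_sub, neg_inj] at hhf
    rw [← sub_eq_iff_eq_add', hhf]
  induction k with
  | zero => simp
  | succ k ih =>
    rw [pow_succ', mul_assoc, ih, mul_add, ← mul_assoc, hfh]
    simp only [add_mul, smul_mul_assoc, mul_smul_comm, mul_assoc]
    module

theorem mul_pow_succ_eq_of_mul_sub_mul_eq (hhf : h * f - f * h = -(2 • f))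
    (hef : e * f - f * e = h) (k : ℕ) :
    e * f ^ (k + 1) = f ^ (k + 1) * e + (k + 1) • (h * f ^ k + k • f ^ k) := by
  have hef' : e * f = f * e + h := by rw [← hef]; abel
  induction k with
  | zero => simp [hef']
  | succ k ih =>
    rw [pow_succ, ← mul_assoc, ih, add_mul, mul_assoc, hef', mul_add, ← mul_assoc, ← pow_succ,
      pow_mul_eq_of_mul_sub_mul_eq hhf]
    simp only [add_mul, smul_mul_assoc, mul_assoc, ← pow_succ]
    module

end Ring

namespace Module.End

variable {K V : Type*} [Field K] [AddCommGroup V] [Module K V]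

theorem exists_hasEigenvector_mem_of_mapsTo [IsAlgClosed K] [FiniteDimensional K V]
    (φ : End K V) {p : Submodule K V} (hp : p ≠ ⊥) (hφp : ∀ x ∈ p, φ x ∈ p) :
    ∃ μ, ∃ x ∈ p, φ.HasEigenvector μ x := by
  have : Nontrivial p := Submodule.nontrivial_iff_ne_bot.mpr hp
  obtain ⟨μ, hμ⟩ := exists_eigenvalue (φ.restrict hφp)
  have hμp := mt (eigenspace_restrict_eq_bot hφp) hμ
  simp only [Submodule.disjoint_def, not_forall] at hμp
  obtain ⟨x, hx, hxp, hx0⟩ := hμp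
  exact ⟨μ, x, hxp, hx, hx0⟩

theorem eq_zero_of_mem_maxGenEigenspace_of_apply_eq_smul {φ : End K V} {μ ν : K} {v : V}
    (hv : v ∈ φ.maxGenEigenspace μ) (hφv : φ v = ν • v) (hνμ : ν ≠ μ) : v = 0 :=
  (φ.disjoint_genEigenspace hνμ 1 ⊤).le_bot
    ⟨eigenspace_le_genEigenspace one_pos (mem_eigenspace_iff.mpr hφv), hv⟩

end Module.End

namespace LieModule

variable {K 𝔤 M : Type*} [Field K] [LieRing 𝔤] [LieAlgebra K 𝔤]
  [AddCommGroup M] [Module K M] [LieRingModule 𝔤 M] [LieModule K 𝔤 M]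

theorem exists_mem_maxGenEigenspace_lie_eq [IsAlgClosed K] [FiniteDimensional K M]
    {x y : 𝔤} {α χ : K} {m : M} (hy : y ∈ (toEnd K 𝔤 𝔤 x).maxGenEigenspace α)
    (hm : m ∈ (toEnd K 𝔤 M x).maxGenEigenspace (α + χ))
    (hm' : m ∈ LinearMap.range (toEnd K 𝔤 M y)) :
    ∃ n ∈ (toEnd K 𝔤 M x).maxGenEigenspace χ, ⁅y, n⁆ = m := by
  set φ := toEnd K 𝔤 M x
  obtain ⟨n, rfl⟩ := hm'
  have hn : n ∈ φ.maxGenEigenspace χ ⊔ ⨆ (ξ) (_ : ξ ≠ χ), φ.maxGenEigenspace ξ := by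
    rw [← iSup_split_single, φ.iSup_maxGenEigenspace_eq_top]
    trivial
  obtain ⟨n₁, hn₁, n₂, hn₂, rfl⟩ := Submodule.mem_sup.mp hn
  have hmap : (⨆ (ξ) (_ : ξ ≠ χ), φ.maxGenEigenspace ξ).map (toEnd K 𝔤 M y) ≤
      ⨆ (ξ) (_ : ξ ≠ α + χ), φ.maxGenEigenspace ξ := by
    simp only [Submodule.map_iSup]
    refine iSup₂_le fun ξ hξ v ⟨w, hw, hwv⟩ => hwv ▸ ?_
    exact le_iSup₂ (f := fun ξ (_ : ξ ≠ α + χ) => φ.maxGenEigenspace ξ) (α + ξ)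
      (by simpa using hξ) (lie_mem_maxGenEigenspace_toEnd hy hw)
  have hyn₂ : ⁅y, n₂⁆ = 0 := by
    refine (φ.independent_maxGenEigenspace (α + χ)).le_bot ⟨?_, hmap ⟨n₂, hn₂, rfl⟩⟩
    have := Submodule.sub_mem _ hm (lie_mem_maxGenEigenspace_toEnd hy hn₁)
    simpa [lie_add] using this
  exact ⟨n₁, hn₁, by simp [lie_add, hyn₂]⟩

end LieModule

namespace IsSl2Triple

variable {K 𝔤 M : Type*} [Field K] [LieRing 𝔤] [LieAlgebra K 𝔤]
  [AddCommGroup M] [Module K M] [LieRingModule 𝔤 M] [LieModule K 𝔤 M] {h e f : 𝔤}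

theorem e_mem_maxGenEigenspace (t : IsSl2Triple h e f) :
    e ∈ (toEnd K 𝔤 𝔤 h).maxGenEigenspace 2 :=
  End.eigenspace_le_maxGenEigenspace <| End.mem_eigenspace_iff.mpr <| by
    simp [t.lie_h_e_smul K]

theorem f_mem_maxGenEigenspace (t : IsSl2Triple h e f) :
    f ∈ (toEnd K 𝔤 𝔤 h).maxGenEigenspace (-2) :=
  End.eigenspace_le_maxGenEigenspace <| End.mem_eigenspace_iff.mpr <| by
    simp [t.lie_lie_smul_f K]

theorem eq_zero_of_lie_f_lie_e_eq_zero [CharZero K] [FiniteDimensional K M]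
    (t : IsSl2Triple h e f) {ν : K} (hν : ∀ k : ℕ, ν ≠ k) {y : M}
    (hy : y ∈ (toEnd K 𝔤 M h).maxGenEigenspace ν) (hfey : ⁅f, ⁅e, y⁆⁆ = 0) : y = 0 := by
  set H := toEnd K 𝔤 M h
  set F := toEnd K 𝔤 M f
  have hHF : H * F - F * H = -(2 • F) := by
    ext m
    simp [H, F, ← lie_lie, t.lie_h_f_nsmul]
  have hEF : toEnd K 𝔤 M e * F - F * toEnd K 𝔤 M e = H := by
    ext m
    simp [H, F, ← lie_lie, t.lie_e_f]
  have hchain (k : ℕ) : (F ^ k) y ∈ H.maxGenEigenspace (ν - 2 * k) := by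
    induction k with
    | zero => simpa using hy
    | succ k ih =>
      convert lie_mem_maxGenEigenspace_toEnd t.f_mem_maxGenEigenspace ih using 2
      · push_cast; ring
      · rw [pow_succ', End.mul_apply, toEnd_apply_apply]
  have hstep (k : ℕ) (hk : (F ^ (k + 1)) y = 0) : (F ^ k) y = 0 := by
    have key := congr($(mul_pow_succ_eq_of_mul_sub_mul_eq hHF hEF k) y)
    have hFEy : (F ^ (k + 1)) (toEnd K 𝔤 M e y) = 0 := by
      rw [pow_succ, End.mul_apply]
      simp [F, hfey]
    simp only [End.mul_apply, LinearMap.add_apply, LinearMap.smul_apply, hk, hFEy, map_zero,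
      zero_add] at key
    rw [← Nat.cast_smul_eq_nsmul K, eq_comm, smul_eq_zero] at key
    have hHz : H ((F ^ k) y) = (-(k : K)) • (F ^ k) y := by
      rw [neg_smul, eq_neg_iff_add_eq_zero, Nat.cast_smul_eq_nsmul]
      exact key.resolve_left (Nat.cast_ne_zero.mpr k.succ_ne_zero)
    exact End.eq_zero_of_mem_maxGenEigenspace_of_apply_eq_smul (hchain k) hHz
      fun hk' => hν k (by linear_combination -hk')
  by_contra hy0
  have hne (k : ℕ) : (F ^ k) y ≠ 0 := by
    induction k with
    | zero => simpa using hy0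
    | succ k ih => exact fun hk => ih (hstep k hk)
  have hinf : (Set.range fun k : ℕ => ν - 2 * k).Infinite :=
    Set.infinite_range_of_injective fun a b hab => by simpa using hab
  refine hinf ((Submodule.finite_ne_bot_of_iSupIndep H.independent_maxGenEigenspace).subset ?_)
  rintro _ ⟨k, rfl⟩ hbot
  exact hne k ((Submodule.eq_bot_iff _).mp hbot _ (hchain k))

theorem disjoint_ker_toEnd_f_range_toEnd_e [IsAlgClosed K] [CharZero K] [FiniteDimensional K M]
    (t : IsSl2Triple h e f) :
    Disjoint (LinearMap.ker (toEnd K 𝔤 M f)) (LinearMap.range (toEnd K 𝔤 M e)) := by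
  set W := LinearMap.ker (toEnd K 𝔤 M f) ⊓ LinearMap.range (toEnd K 𝔤 M e)
  have hW : ∀ v ∈ W, toEnd K 𝔤 M h v ∈ W := by
    rintro _ ⟨hfv, w, rfl⟩
    refine ⟨?_, ⁅h, w⁆ + 2 • w, ?_⟩
    · simp_all [leibniz_lie f h, ← lie_skew f h, t.lie_h_f_nsmul]
    · simp [leibniz_lie h e w, t.lie_h_e_nsmul, add_comm]
  rw [disjoint_iff]
  by_contra hW0
  obtain ⟨μ, _, ⟨hfx, y, rfl⟩, hx⟩ := (toEnd K 𝔤 M h).exists_hasEigenvector_mem_of_mapsTo hW0 hW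
  have P : t.symm.HasPrimitiveVectorWith ⁅e, y⁆ (-μ) :=
    ⟨hx.2, by simpa [neg_lie] using hx.apply_eq_smul, hfx⟩
  obtain ⟨n, hn⟩ := P.exists_nat
  obtain ⟨y', hy', hy'y⟩ := LieModule.exists_mem_maxGenEigenspace_lie_eq (χ := μ - 2)
    t.e_mem_maxGenEigenspace (by simpa using End.eigenspace_le_maxGenEigenspace hx.1) ⟨y, rfl⟩
  have hν (k : ℕ) : μ - 2 ≠ k := fun hk => by
    have : ((n + k + 2 : ℕ) : K) = 0 := by push_cast; linear_combination -hk - hn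
    exact absurd (Nat.cast_eq_zero.mp this) (by omega)
  apply hx.2
  rw [← hy'y, t.eq_zero_of_lie_f_lie_e_eq_zero hν hy' (hy'y ▸ hfx), lie_zero]

end IsSl2Triple

theorem LinearMap.isCompl_ker_range_of_disjoint {K V U : Type*} [Field K]
    [AddCommGroup V] [Module K V] [FiniteDimensional K V]
    [AddCommGroup U] [Module K U] [FiniteDimensional K U] (A : V →ₗ[K] U) (B : U →ₗ[K] V)
    (hAB : Disjoint (ker A) (range B)) (hBA : Disjoint (ker B) (range A)) :
    IsCompl (ker A) (range B) := by
  refine (Submodule.isCompl_iff_disjoint _ _ ?_).mpr hAB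
  have := Submodule.finrank_add_finrank_le_of_disjoint hBA
  have := A.finrank_range_add_finrank_ker
  have := B.finrank_range_add_finrank_ker
  have := Submodule.finrank_add_finrank_le_of_disjoint hAB
  omega

theorem stmt_8_general {K L : Type*} [Field K] [IsAlgClosed K] [CharZero K]
    [LieRing L] [LieAlgebra K L] [Module.Finite K L]
    (e h f : L) (hhe : ⁅h, e⁆ = (2 : K) • e) (hhf : ⁅h, f⁆ = (-2 : K) • f)
    (hef : ⁅e, f⁆ = h) :
    IsCompl (LinearMap.ker (LieAlgebra.ad K L f))
      (LinearMap.range (LieAlgebra.ad K L e)) := by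
  by_cases hh : h = 0
  · have he : e = 0 := by simpa [hh, eq_comm] using hhe
    have hf : f = 0 := by simpa [hh, eq_comm] using hhf
    simpa [he, hf] using isCompl_top_bot
  · have t : IsSl2Triple h e f :=
      ⟨hh, hef, by rw [hhe, two_smul, two_nsmul], by rw [hhf, neg_smul, two_smul, two_nsmul]⟩
    exact (LieAlgebra.ad K L f).isCompl_ker_range_of_disjoint (LieAlgebra.ad K L e)
      t.disjoint_ker_toEnd_f_range_toEnd_e t.symm.disjoint_ker_toEnd_f_range_toEnd_e

/-- For an `sl₂`-triple `{e, h, f}` in a finite-dimensional semisimple Lie algebra over an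
algebraically closed field of characteristic zero, `g = z(f) ⊕ [g, e]` as vector spaces. -/
theorem stmt_8 {K L : Type*} [Field K] [IsAlgClosed K] [CharZero K]
    [LieRing L] [LieAlgebra K L] [Module.Finite K L] [LieAlgebra.IsSemisimple K L]
    (e h f : L) (hhe : ⁅h, e⁆ = (2 : K) • e) (hhf : ⁅h, f⁆ = (-2 : K) • f)
    (hef : ⁅e, f⁆ = h) :
    IsCompl (LinearMap.ker (LieAlgebra.ad K L f))
      (LinearMap.range (LieAlgebra.ad K L e)) :=
  stmt_8_general e h f hhe hhf hef
end

section
/- Let V be a finite-dimensional representation of sl2 over a field of characteristic zero, with e, f, h acting as the standard basis. Then dim(ker f) + dim(range e) = dim V. -/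
/-!
The operators `E` and `F` are nilpotent, because `ad H` scales their powers by the pairwise
distinct eigenvalues `2k`, resp. `-2k`. Hence the Weyl element `w = exp E * exp (-F) * exp E` is
defined and invertible, and evaluating `exp (ad ·)` on the three-step chains
`E ↦ 0`, `E ↦ H ↦ -2F ↦ 0` and `E + H - F ↦ -2E - H ↦ 2E ↦ 0` gives `w E w⁻¹ = -F`.
So `E` and `F` have the same rank, and rank–nullity for `F` finishes the proof.
-/

open IsNilpotent (exp)
open LieAlgebra LinearMap Module

theorem Module.End.exp_apply_of_apply_eq_of_apply_eq_of_apply_eq_zero {M : Type*}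
    [AddCommGroup M] [Module ℚ M] {D : End ℚ M} (hD : IsNilpotent D) {x y z : M}
    (hx : D x = y) (hy : D y = z) (hz : D z = 0) : exp D x = x + y + (2 : ℚ)⁻¹ • z := by
  have h3 : (D ^ 3) • x = 0 := by simp [pow_succ, hx, hy, hz]
  rw [← End.smul_def, IsNilpotent.exp_smul_eq_sum h3 hD]
  simp [Finset.sum_range_succ, pow_succ, hx, hy, Nat.factorial]

section

attribute [local instance] LieRing.ofAssociativeRing

theorem isNilpotent_of_lie_eq_smul {K A : Type*} [Field K] [CharZero K] [Ring A] [Algebra K A]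
    [FiniteDimensional K A] {h a : A} {c : K} (hc : c ≠ 0) (hha : ⁅h, a⁆ = c • a) :
    IsNilpotent a := by
  have hpow (k : ℕ) : ad K A h (a ^ k) = ((k : K) * c) • a ^ k := by
    induction k with
    | zero => simp [Ring.lie_def]
    | succ k ih =>
      have leibniz : ⁅h, a ^ k * a⁆ = ⁅h, a ^ k⁆ * a + a ^ k * ⁅h, a⁆ := by
        simp only [Ring.lie_def]
        noncomm_ring
      rw [ad_apply, pow_succ, leibniz, ← ad_apply (R := K), ih, hha, smul_mul_assoc,
        mul_smul_comm, ← add_smul, ← pow_succ]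
      push_cast
      ring_nf
  by_contra hn
  have hinj : Function.Injective fun k : ℕ ↦ (k : K) * c :=
    fun k l hkl ↦ Nat.cast_injective (mul_right_cancel₀ hc hkl)
  exact Module.Finite.not_linearIndependent_of_infinite _
    ((ad K A h).eigenvectors_linearIndependent' _ hinj (fun k ↦ a ^ k)
      fun k ↦ ⟨End.mem_eigenspace_iff.mpr (hpow k), fun h0 ↦ hn ⟨k, h0⟩⟩)

variable {A : Type*} [Ring A] [Algebra ℚ A]

theorem IsNilpotent.exp_mulLeft_apply {a : A} (ha : IsNilpotent a) (x : A) :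
    exp (mulLeft ℚ a) x = exp a * x := by
  obtain ⟨k, hk⟩ := ha
  rw [exp_eq_sum (k := k) (by rw [pow_mulLeft, hk, mulLeft_zero_eq_zero]), exp_eq_sum hk]
  simp [Finset.sum_mul, pow_mulLeft]

theorem IsNilpotent.exp_mulRight_apply {a : A} (ha : IsNilpotent a) (x : A) :
    exp (mulRight ℚ a) x = x * exp a := by
  obtain ⟨k, hk⟩ := ha
  rw [exp_eq_sum (k := k) (by rw [pow_mulRight, hk, mulRight_zero_eq_zero]), exp_eq_sum hk]
  simp [Finset.mul_sum, pow_mulRight]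

theorem IsNilpotent.exp_ad_apply {a : A} (ha : IsNilpotent a) (x : A) :
    exp (ad ℚ A a) x = exp a * x * exp (-a) := by
  have hL : IsNilpotent (mulLeft ℚ a) := (isNilpotent_mulLeft_iff ℚ a).mpr ha
  have hR : IsNilpotent (mulRight ℚ (-a)) := (isNilpotent_mulRight_iff ℚ (-a)).mpr ha.neg
  have hLR : ad ℚ A a = mulLeft ℚ a + mulRight ℚ (-a) := by
    ext y
    simp [sub_eq_add_neg, Ring.lie_def]
  rw [hLR, exp_add_of_commute (commute_mulLeft_right a (-a)) hL hR, End.mul_apply,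
    ha.neg.exp_mulRight_apply, ha.exp_mulLeft_apply, mul_assoc]

theorem IsNilpotent.semiconjBy_exp {a : A} (ha : IsNilpotent a) (x : A) :
    SemiconjBy (exp a) x (exp (ad ℚ A a) x) := by
  rw [SemiconjBy, ha.exp_ad_apply, mul_assoc _ (exp (-a)), ha.exp_neg_mul_exp_self, mul_one]

noncomputable def weylElement (e f : A) : A := exp e * exp (-f) * exp e

theorem isUnit_weylElement {e f : A} (he : IsNilpotent e) (hf : IsNilpotent f) :
    IsUnit (weylElement e f) :=
  (he.isUnit_exp.mul hf.neg.isUnit_exp).mul he.isUnit_exp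

theorem semiconjBy_weylElement {e h f : A} (he : IsNilpotent e) (hf : IsNilpotent f)
    (hhe : ⁅h, e⁆ = 2 • e) (hhf : ⁅h, f⁆ = -(2 • f)) (hef : ⁅e, f⁆ = h) :
    SemiconjBy (weylElement e f) e (-f) := by
  have hade : IsNilpotent (ad ℚ A e) := ad_nilpotent_of_nilpotent he
  have hadf : IsNilpotent (ad ℚ A (-f)) := ad_nilpotent_of_nilpotent hf.neg
  have h₁ : exp (ad ℚ A e) e = e := by
    simpa using
      End.exp_apply_of_apply_eq_of_apply_eq_of_apply_eq_zero hade (lie_self e) (map_zero _)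
        (map_zero _)
  have h₂ : exp (ad ℚ A (-f)) e = e + h - f := by
    rw [End.exp_apply_of_apply_eq_of_apply_eq_of_apply_eq_zero hadf (y := h) (z := -(2 • f))]
    · module
    · rw [ad_apply, neg_lie, lie_skew, hef]
    · rw [ad_apply, neg_lie, lie_skew, hhf]
    · rw [ad_apply, neg_lie, lie_neg, lie_nsmul, lie_self, nsmul_zero, neg_zero, neg_zero]
  have h₃ : exp (ad ℚ A e) (e + h - f) = -f := by
    rw [End.exp_apply_of_apply_eq_of_apply_eq_of_apply_eq_zero hade (y := -(2 • e) - h)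
      (z := 2 • e)]
    · module
    · rw [ad_apply, lie_sub, lie_add, lie_self, ← lie_skew, hhe, hef, zero_add]
    · rw [ad_apply, lie_sub, lie_neg, lie_nsmul, lie_self, ← lie_skew, hhe]
      simp
    · rw [ad_apply, lie_nsmul, lie_self, nsmul_zero]
  have hu₁ : SemiconjBy (exp e) e e := by
    simpa only [h₁] using he.semiconjBy_exp e
  have hv : SemiconjBy (exp (-f)) e (e + h - f) := by
    simpa only [h₂] using hf.neg.semiconjBy_exp e
  have hu₂ : SemiconjBy (exp e) (e + h - f) (-f) := by
    simpa only [h₃] using he.semiconjBy_exp (e + h - f)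
  exact (hu₂.mul_left hv).mul_left hu₁

end

theorem LinearMap.finrank_range_eq_of_semiconjBy {R M : Type*} [Semiring R] [AddCommMonoid M]
    [Module R M] {g a b : End R M} (hg : IsUnit g) (h : SemiconjBy g a b) :
    finrank R (range a) = finrank R (range b) := by
  have hbij := (End.isUnit_iff g).mp hg
  rw [(Submodule.equivMapOfInjective g hbij.1 _).finrank_eq, ← range_comp, ← End.mul_eq_comp,
    h.eq, End.mul_eq_comp, range_comp_of_range_eq_top _ (range_eq_top.mpr hbij.2)]

/-- For a finite-dimensional representation of `sl₂` in characteristic zero,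
`dim (ker f) + dim (range e) = dim V`. -/
theorem stmt_9 {K V : Type*} [Field K] [CharZero K] [AddCommGroup V] [Module K V]
    [FiniteDimensional K V]
    (E H F : Module.End K V)
    (hHE : ⁅H, E⁆ = (2 : K) • E) (hHF : ⁅H, F⁆ = (-2 : K) • F) (hEF : ⁅E, F⁆ = H) :
    Module.finrank K (LinearMap.ker F) + Module.finrank K (LinearMap.range E) =
      Module.finrank K V := by
  let _ : Algebra ℚ (End K V) := Algebra.compHom _ (algebraMap ℚ K)
  have hE : IsNilpotent E := isNilpotent_of_lie_eq_smul two_ne_zero hHE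
  have hF : IsNilpotent F := isNilpotent_of_lie_eq_smul (by norm_num) hHF
  have hW : SemiconjBy (weylElement E F) E (-F) :=
    semiconjBy_weylElement hE hF (by rw [hHE, two_smul, two_nsmul])
      (by rw [hHF, neg_smul, two_smul, two_nsmul]) hEF
  rw [finrank_range_eq_of_semiconjBy (isUnit_weylElement hE hF) hW, range_neg, add_comm,
    finrank_range_add_finrank_ker]
end

section
/- Let g = ⊕_j g_j be a good grading for a nilpotent e in a finite-dimensional semisimple Lie algebra, let l ⊆ g_{-1} be a subspace isotropic for ω(x,y) = κ(e,[x,y]), and set m = l ⊕ (⊕_{j ≤ -2} g_j). Then m is a Lie subalgebra of g, and the linear functional χ = κ(e, ·) vanishes on [m, m], i.e. χ restricts to a Lie algebra character of m. -/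
/-!
Every bracket of two elements of `m` is a bracket of two elements of `l`, which lies in `g_{-2}`,
plus a term of degree `≤ -3`. Hence `m` is closed under brackets; and `χ = κ(e, ·)` kills the first
term by isotropy of `l`, and the second because `κ(g_i, g_j) = 0` unless `i + j = 0`, a trace
computation: `ad x ∘ ad y` shifts the degree by `i + j`.
-/

open Set

namespace LieAlgebra

variable {K L : Type*} [LieRing L]

section CommRing

variable [CommRing K] [LieAlgebra K L] {G : ℤ → Submodule K L}

theorem iSup_Iic_mono (G : ℤ → Submodule K L) : Monotone fun p ↦ ⨆ i ∈ Iic p, G i :=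
  fun _ _ hpq ↦ biSup_mono fun _ hi ↦ Iic_subset_Iic.mpr hpq hi

theorem lie_mem_iSup_Iic (hbr : ∀ i j : ℤ, ∀ x ∈ G i, ∀ y ∈ G j, ⁅x, y⁆ ∈ G (i + j))
    {p q : ℤ} {x y : L} (hx : x ∈ ⨆ i ∈ Iic p, G i) (hy : y ∈ ⨆ j ∈ Iic q, G j) :
    ⁅x, y⁆ ∈ ⨆ k ∈ Iic (p + q), G k := by
  have hle : Submodule.map₂ (ad K L : L →ₗ[K] L →ₗ[K] L) (⨆ i ∈ Iic p, G i)
      (⨆ j ∈ Iic q, G j) ≤ ⨆ k ∈ Iic (p + q), G k := by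
    simp only [Submodule.map₂_iSup_left, Submodule.map₂_iSup_right, iSup_le_iff,
      Submodule.map₂_le]
    intro j hj i hi x hx y hy
    simpa only [LieHom.coe_toLinearMap, ad_apply] using
      le_biSup G (mem_Iic.mpr (add_le_add hi hj)) (hbr i j x hx y hy)
  exact hle (Submodule.apply_mem_map₂ _ hx hy)

theorem exists_lie_eq_lie_add_of_mem_sup
    (hbr : ∀ i j : ℤ, ∀ x ∈ G i, ∀ y ∈ G j, ⁅x, y⁆ ∈ G (i + j))
    {l : Submodule K L} (hl : l ≤ G (-1)) {x y : L}
    (hx : x ∈ l ⊔ ⨆ j ∈ Iic (-2 : ℤ), G j) (hy : y ∈ l ⊔ ⨆ j ∈ Iic (-2 : ℤ), G j) :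
    ∃ a ∈ l, ∃ c ∈ l, ∃ z ∈ ⨆ k ∈ Iic (-3 : ℤ), G k, ⁅x, y⁆ = ⁅a, c⁆ + z := by
  have hl' : l ≤ ⨆ j ∈ Iic (-1 : ℤ), G j := hl.trans (le_biSup G self_mem_Iic)
  have hy' : y ∈ ⨆ j ∈ Iic (-1 : ℤ), G j :=
    sup_le hl' (iSup_Iic_mono G (by norm_num)) hy
  obtain ⟨a, ha, b, hb, rfl⟩ := Submodule.mem_sup.mp hx
  obtain ⟨c, hc, d, hd, rfl⟩ := Submodule.mem_sup.mp hy
  refine ⟨a, ha, c, hc, ⁅a, d⁆ + ⁅b, c + d⁆, add_mem ?_ ?_, by rw [add_lie, lie_add, add_assoc]⟩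
  · simpa using lie_mem_iSup_Iic hbr (hl' ha) hd
  · simpa using lie_mem_iSup_Iic hbr hb hy'

end CommRing

section Field

variable [Field K] [LieAlgebra K L] [Module.Finite K L] {G : ℤ → Submodule K L}

theorem killingForm_eq_zero_of_mem_of_add_ne_zero (hdecomp : DirectSum.IsInternal G)
    (hbr : ∀ i j : ℤ, ∀ x ∈ G i, ∀ y ∈ G j, ⁅x, y⁆ ∈ G (i + j))
    {i j : ℤ} (hij : i + j ≠ 0) {x y : L} (hx : x ∈ G i) (hy : y ∈ G j) :
    killingForm K L x y = 0 := by
  rw [killingForm_apply_apply]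
  refine LinearMap.trace_eq_zero_of_mapsTo_ne hdecomp (· + (i + j)) (fun k ↦ by omega) ?_
  intro k u hu
  have h : ⁅x, ⁅y, u⁆⁆ ∈ G (i + (j + k)) := hbr i _ x hx _ (hbr j k y hy u hu)
  rwa [show i + (j + k) = k + (i + j) by ring] at h

theorem killingForm_eq_zero_of_mem_iSup_Iic (hdecomp : DirectSum.IsInternal G)
    (hbr : ∀ i j : ℤ, ∀ x ∈ G i, ∀ y ∈ G j, ⁅x, y⁆ ∈ G (i + j))
    {i p : ℤ} (hip : i + p < 0) {x z : L} (hx : x ∈ G i) (hz : z ∈ ⨆ k ∈ Iic p, G k) :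
    killingForm K L x z = 0 := by
  have hle : ⨆ k ∈ Iic p, G k ≤ LinearMap.ker (killingForm K L x) :=
    iSup₂_le fun k (hk : k ≤ p) y hy ↦
      killingForm_eq_zero_of_mem_of_add_ne_zero hdecomp hbr (by omega) hx hy
  exact hle hz

end Field

end LieAlgebra

theorem stmt_11_general {K L : Type*} [Field K]
    [LieRing L] [LieAlgebra K L] [Module.Finite K L]
    (G : ℤ → Submodule K L) (hdecomp : DirectSum.IsInternal G)
    (hbr : ∀ i j : ℤ, ∀ x ∈ G i, ∀ y ∈ G j, ⁅x, y⁆ ∈ G (i + j))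
    (e : L) (he : e ∈ G 2)
    (l : Submodule K L) (hl : l ≤ G (-1))
    (hiso : ∀ x ∈ l, ∀ y ∈ l, killingForm K L e ⁅x, y⁆ = 0)
    (m : Submodule K L) (hm : m = l ⊔ ⨆ j ∈ Set.Iic (-2 : ℤ), G j) :
    (∀ x ∈ m, ∀ y ∈ m, ⁅x, y⁆ ∈ m) ∧
    (∀ x ∈ m, ∀ y ∈ m, killingForm K L e ⁅x, y⁆ = 0) := by
  subst hm
  refine ⟨fun x hx y hy ↦ ?_, fun x hx y hy ↦ ?_⟩
  · obtain ⟨a, ha, c, hc, z, hz, hxy⟩ := LieAlgebra.exists_lie_eq_lie_add_of_mem_sup hbr hl hx hy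
    have hac : ⁅a, c⁆ ∈ ⨆ j ∈ Iic (-2 : ℤ), G j :=
      le_biSup G self_mem_Iic (by simpa using hbr _ _ a (hl ha) c (hl hc))
    have hz' : z ∈ ⨆ j ∈ Iic (-2 : ℤ), G j := LieAlgebra.iSup_Iic_mono G (by norm_num) hz
    exact hxy ▸ le_sup_right (a := l) (add_mem hac hz')
  · obtain ⟨a, ha, c, hc, z, hz, hxy⟩ := LieAlgebra.exists_lie_eq_lie_add_of_mem_sup hbr hl hx hy
    rw [hxy, map_add, hiso a ha c hc,
      LieAlgebra.killingForm_eq_zero_of_mem_iSup_Iic hdecomp hbr (by norm_num) he hz, add_zero]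

/-- For a good grading of a nilpotent `e` and an isotropic subspace `l ⊆ g (-1)` for
`ω(x,y) = κ(e,[x,y])`, the space `m = l ⊕ (⊕_{j ≤ -2} g j)` is a Lie subalgebra and
`χ = κ(e, ·)` vanishes on `[m, m]`, i.e. restricts to a character of `m`. -/
theorem stmt_11 {K L : Type*} [Field K] [IsAlgClosed K] [CharZero K]
    [LieRing L] [LieAlgebra K L] [Module.Finite K L] [LieAlgebra.IsSemisimple K L]
    (G : ℤ → Submodule K L) (hdecomp : DirectSum.IsInternal G)
    (hbr : ∀ i j : ℤ, ∀ x ∈ G i, ∀ y ∈ G j, ⁅x, y⁆ ∈ G (i + j))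
    (e : L) (he : e ∈ G 2)
    (hinj : ∀ j : ℤ, j ≤ -1 → ∀ x ∈ G j, ⁅e, x⁆ = 0 → x = 0)
    (l : Submodule K L) (hl : l ≤ G (-1))
    (hiso : ∀ x ∈ l, ∀ y ∈ l, killingForm K L e ⁅x, y⁆ = 0)
    (m : Submodule K L) (hm : m = l ⊔ ⨆ j ∈ Set.Iic (-2 : ℤ), G j) :
    (∀ x ∈ m, ∀ y ∈ m, ⁅x, y⁆ ∈ m) ∧
    (∀ x ∈ m, ∀ y ∈ m, killingForm K L e ⁅x, y⁆ = 0) :=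
  stmt_11_general G hdecomp hbr e he l hl hiso m hm
end

section
/- Let λ and μ be two partitions of n with λ covering μ in the dominance order. Then μ is obtained from λ by decreasing one part λ_i by 1 and increasing a later part λ_j (with j > i the smallest index such that λ_j < λ_i - 1, allowing λ_j = 0) by 1, where either λ_j = λ_i - 2 or λ_ℓ = λ_i for all i < ℓ < j. -/
/-- A partition of `n`, encoded as a weakly decreasing function `ℕ → ℕ` with finite
support whose values sum to `n` (the parts, extended by zeros). -/
def IsPartitionOf (n : ℕ) (f : ℕ → ℕ) : Prop :=
  Antitone f ∧ (Function.support f).Finite ∧ ∑ᶠ i, f i = n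

/-- The dominance order on partitions: all partial sums of `f` dominate those of `g`. -/
def Dominates (f g : ℕ → ℕ) : Prop :=
  ∀ k, ∑ i ∈ Finset.range k, g i ≤ ∑ i ∈ Finset.range k, f i

/-- `f` covers `g` in the dominance order on partitions of `n`. -/
def CoversDom (n : ℕ) (f g : ℕ → ℕ) : Prop :=
  Dominates f g ∧ f ≠ g ∧
    ∀ h, IsPartitionOf n h → Dominates f h → Dominates h g → h = f ∨ h = g

open Finset Function

private def mov (f : ℕ → ℕ) (a b : ℕ) : ℕ → ℕ :=
  Function.update (Function.update f a (f a - 1)) b (f b + 1)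

private lemma mov_apply (f : ℕ → ℕ) (a b k : ℕ) :
    mov f a b k = if k = b then f b + 1 else if k = a then f a - 1 else f k := by
  simp [mov, Function.update_apply]

private lemma sum_mov (f : ℕ → ℕ) {a b : ℕ} (hab : a < b) (ha : 1 ≤ f a) (m : ℕ) :
    ∑ k ∈ Finset.range m, mov f a b k + (if a < m then 1 else 0)
      = ∑ k ∈ Finset.range m, f k + (if b < m then 1 else 0) := by
  induction m with
  | zero => simp
  | succ m ih =>
    rw [Finset.sum_range_succ, Finset.sum_range_succ, mov_apply]
    rcases eq_or_ne m b with rfl | hmb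
    · rw [if_pos rfl]
      split_ifs at ih ⊢ <;> omega
    · rw [if_neg hmb]
      rcases eq_or_ne m a with rfl | hma
      · rw [if_pos rfl]
        split_ifs at ih ⊢ <;> omega
      · rw [if_neg hma]
        split_ifs at ih ⊢ <;> omega

private lemma mov_antitone {f : ℕ → ℕ} (hf : Antitone f) {a b : ℕ} (hab : a < b)
    (h1 : b = a + 1 → f b + 2 ≤ f a)
    (h2 : a + 1 < b → f (a + 1) + 1 ≤ f a)
    (h3 : a + 1 < b → f b + 1 ≤ f (b - 1)) :
    ∀ k, mov f a b (k + 1) ≤ mov f a b k := by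
  intro k
  have hmono : f (k + 1) ≤ f k := hf (Nat.le_succ k)
  rcases eq_or_ne k a with rfl | hka
  · have hR : mov f k b k = f k - 1 := by
      rw [mov_apply, if_neg (by omega), if_pos rfl]
    rcases eq_or_ne (k + 1) b with hb | hb
    · have hL : mov f k b (k + 1) = f b + 1 := by rw [mov_apply, if_pos hb]
      have := h1 (by omega)
      omega
    · have hL : mov f k b (k + 1) = f (k + 1) := by
        rw [mov_apply, if_neg hb, if_neg (by omega)]
      have := h2 (by omega)
      omega
  · rcases eq_or_ne (k + 1) a with ha1 | ha1
    · have hL : mov f a b (k + 1) = f a - 1 := by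
        rw [mov_apply, if_neg (by omega), if_pos ha1]
      have hR : mov f a b k = f k := by
        rw [mov_apply, if_neg (by omega), if_neg hka]
      have : f a ≤ f k := hf (by omega)
      omega
    · rcases eq_or_ne k b with rfl | hkb
      · have hR : mov f a k k = f k + 1 := by rw [mov_apply, if_pos rfl]
        have hL : mov f a k (k + 1) = f (k + 1) := by
          rw [mov_apply, if_neg (by omega), if_neg (by omega)]
        omega
      · rcases eq_or_ne (k + 1) b with hb1 | hb1
        · have hL : mov f a b (k + 1) = f b + 1 := by rw [mov_apply, if_pos hb1]
          have hR : mov f a b k = f k := by rw [mov_apply, if_neg hkb, if_neg hka]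
          have h3' := h3 (by omega)
          have hbk : b - 1 = k := by omega
          rw [hbk] at h3'
          omega
        · have hL : mov f a b (k + 1) = f (k + 1) := by
            rw [mov_apply, if_neg hb1, if_neg ha1]
          have hR : mov f a b k = f k := by rw [mov_apply, if_neg hkb, if_neg hka]
          omega

private lemma isPartitionOf_mk {n N : ℕ} {ν : ℕ → ℕ} (hmono : ∀ k, ν (k + 1) ≤ ν k)
    (hzero : ∀ m, N ≤ m → ν m = 0) (hsum : ∑ k ∈ Finset.range N, ν k = n) :
    IsPartitionOf n ν := by
  have hsupp : Function.support ν ⊆ ↑(Finset.range N) := by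
    intro k hk
    simp only [Finset.coe_range, Set.mem_Iio]
    by_contra h
    exact hk (hzero k (not_lt.1 h))
  refine ⟨antitone_nat_of_succ_le hmono, ?_, ?_⟩
  · exact Set.Finite.subset (Finset.range N).finite_toSet hsupp
  · rw [finsum_eq_sum_of_support_subset _ hsupp]
    exact hsum

private lemma part_bound {n : ℕ} {f : ℕ → ℕ} (hf : IsPartitionOf n f) :
    ∃ N, ∀ m, N ≤ m → f m = 0 := by
  obtain ⟨B, hB⟩ := hf.2.1.bddAbove
  refine ⟨B + 1, fun m hm => ?_⟩
  by_contra h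
  have := hB (Function.mem_support.2 h)
  omega

private lemma part_sum_eq {n : ℕ} {f : ℕ → ℕ} (hf : IsPartitionOf n f)
    {N : ℕ} (hN : ∀ m, N ≤ m → f m = 0) {m : ℕ} (hm : N ≤ m) :
    ∑ k ∈ Finset.range m, f k = n := by
  rw [← hf.2.2]
  refine (finsum_eq_sum_of_support_subset _ ?_).symm
  intro k hk
  simp only [Finset.coe_range, Set.mem_Iio]
  by_contra h
  exact hk (hN k (by omega))

/-- Gerstenhaber: if `λ` covers `μ` in the dominance order, then `μ` is obtained from `λ`
by decreasing a part `λ i` by 1 and increasing a part `λ j` by 1, where `j > i` is the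
smallest index with `λ j < λ i - 1` (`λ j = 0` allowed), and either `λ j = λ i - 2` or
`λ ℓ = λ i` for all `i < ℓ < j`; `μ` is the resulting sequence up to reordering. -/
theorem stmt_13 (n : ℕ) (f g : ℕ → ℕ)
    (hf : IsPartitionOf n f) (hg : IsPartitionOf n g)
    (hcov : CoversDom n f g) :
    ∃ i j : ℕ, i < j ∧ f j < f i - 1 ∧
      (∀ k, i < k → k < j → ¬ f k < f i - 1) ∧
      (f j = f i - 2 ∨ ∀ l, i < l → l < j → f l = f i) ∧
      ∃ σ : Equiv.Perm ℕ,
        ∀ k, g k = Function.update (Function.update f i (f i - 1)) j (f j + 1) (σ k) := by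
  obtain ⟨hdom, hne, hmin⟩ := hcov
  obtain ⟨Nf, hNf⟩ := part_bound hf
  obtain ⟨Ng, hNg⟩ := part_bound hg
  set N0 := max Nf Ng with hN0def
  have hN0f : ∀ m, N0 ≤ m → f m = 0 := fun m hm => hNf m (by omega)
  have hN0g : ∀ m, N0 ≤ m → g m = 0 := fun m hm => hNg m (by omega)
  have hSfs : ∀ m, ∑ k ∈ Finset.range (m + 1), f k = ∑ k ∈ Finset.range m, f k + f m :=
    fun m => Finset.sum_range_succ f m
  have hSgs : ∀ m, ∑ k ∈ Finset.range (m + 1), g k = ∑ k ∈ Finset.range m, g k + g m :=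
    fun m => Finset.sum_range_succ g m
  have hSfn : ∀ m, N0 ≤ m → ∑ k ∈ Finset.range m, f k = n := fun m hm => part_sum_eq hf hN0f hm
  have hSgn : ∀ m, N0 ≤ m → ∑ k ∈ Finset.range m, g k = n := fun m hm => part_sum_eq hg hN0g hm
  have hdomS : ∀ m, ∑ k ∈ Finset.range m, g k ≤ ∑ k ∈ Finset.range m, f k := hdom
  -- Claim A: partial sums differ by at most 1
  have claimA : ∀ m, ∑ k ∈ Finset.range m, f k ≤ ∑ k ∈ Finset.range m, g k + 1 := by
    set T : ℕ → ℕ :=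
      fun m => min (∑ k ∈ Finset.range m, f k) ((∑ k ∈ Finset.range m, g k) + 1) with hTdef
    set ν : ℕ → ℕ := fun k => T (k + 1) - T k with hνdef
    have hT : ∀ m, T m
        = min (∑ k ∈ Finset.range m, f k) ((∑ k ∈ Finset.range m, g k) + 1) := fun _ => rfl
    have hν : ∀ k, ν k = T (k + 1) - T k := fun _ => rfl
    have hTmono : ∀ m, T m ≤ T (m + 1) := by
      intro m
      rw [hT m, hT (m + 1)]
      have := hSfs m; have := hSgs m
      omega
    have hTsum : ∀ m, ∑ k ∈ Finset.range m, ν k = T m := by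
      intro m
      induction m with
      | zero => simp [hT 0]
      | succ m ih =>
        rw [Finset.sum_range_succ, ih, hν m]
        have := hTmono m
        omega
    have hνanti : ∀ k, ν (k + 1) ≤ ν k := by
      intro k
      have c1 : f (k + 1) ≤ f k := hf.1 (Nat.le_succ k)
      have c2 : g (k + 1) ≤ g k := hg.1 (Nat.le_succ k)
      have e1 := hSfs k; have e3 := hSgs k
      have e2 : ∑ k' ∈ Finset.range (k + 2), f k'
          = ∑ k' ∈ Finset.range (k + 1), f k' + f (k + 1) := Finset.sum_range_succ f (k + 1)
      have e4 : ∑ k' ∈ Finset.range (k + 2), g k'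
          = ∑ k' ∈ Finset.range (k + 1), g k' + g (k + 1) := Finset.sum_range_succ g (k + 1)
      rw [hν k, hν (k + 1), hT k, hT (k + 1), hT (k + 2)]
      omega
    have hνzero : ∀ m, N0 ≤ m → ν m = 0 := by
      intro m hm
      have h1 := hSfn m hm; have h2 := hSgn m hm
      have h3 := hSfn (m + 1) (by omega); have h4 := hSgn (m + 1) (by omega)
      rw [hν m, hT m, hT (m + 1)]
      omega
    have hνsum : ∑ k ∈ Finset.range N0, ν k = n := by
      rw [hTsum, hT]
      have := hSfn N0 le_rfl; have := hSgn N0 le_rfl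
      omega
    have hνP : IsPartitionOf n ν := isPartitionOf_mk hνanti hνzero hνsum
    have hdfν : Dominates f ν := by
      intro m
      rw [hTsum m, hT m]
      omega
    have hdνg : Dominates ν g := by
      intro m
      rw [hTsum m, hT m]
      have := hdomS m
      omega
    rcases hmin ν hνP hdfν hdνg with hEq | hEq
    · intro m
      have h : ∑ k ∈ Finset.range m, ν k = ∑ k ∈ Finset.range m, f k := by rw [hEq]
      rw [hTsum m, hT m] at h
      omega
    · exfalso
      apply hne
      funext k
      have e1 : ∑ k' ∈ Finset.range (k + 1), ν k' = ∑ k' ∈ Finset.range (k + 1), g k' := by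
        rw [hEq]
      have e2 : ∑ k' ∈ Finset.range k, ν k' = ∑ k' ∈ Finset.range k, g k' := by rw [hEq]
      rw [hTsum (k + 1), hT (k + 1)] at e1
      rw [hTsum k, hT k] at e2
      have := hdomS k; have := hdomS (k + 1)
      have := hSfs k; have := hSgs k
      omega
  -- the first index where f and g differ
  have hexne : ∃ k, f k ≠ g k := by
    by_contra hc
    push_neg at hc
    exact hne (funext hc)
  obtain ⟨i, hfgi, hfglt⟩ : ∃ i, f i ≠ g i ∧ ∀ k, k < i → f k = g k := by
    refine ⟨Nat.find hexne, Nat.find_spec hexne, fun k hk => ?_⟩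
    have := Nat.find_min hexne hk
    tauto
  have hSeqle : ∀ m, m ≤ i → ∑ k ∈ Finset.range m, f k = ∑ k ∈ Finset.range m, g k := by
    intro m hm
    refine Finset.sum_congr rfl fun k hk => ?_
    rw [Finset.mem_range] at hk
    exact hfglt k (by omega)
  have hgilt : g i < f i := by
    have h1 := hdomS (i + 1)
    have := hSfs i; have := hSgs i
    have := hSeqle i le_rfl
    omega
  have hfi1 : 1 ≤ f i := by omega
  -- the last index of the disagreement interval
  obtain ⟨j, hij, hSj1, hjmin⟩ : ∃ j, i < j ∧
      (∑ k ∈ Finset.range (j + 1), f k = ∑ k ∈ Finset.range (j + 1), g k) ∧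
      ∀ m, i < m → m < j →
        ∑ k ∈ Finset.range (m + 1), f k ≠ ∑ k ∈ Finset.range (m + 1), g k := by
    have hexj : ∃ m, i < m ∧
        ∑ k ∈ Finset.range (m + 1), f k = ∑ k ∈ Finset.range (m + 1), g k := by
      refine ⟨max N0 (i + 1), by omega, ?_⟩
      rw [hSfn _ (by omega), hSgn _ (by omega)]
    exact ⟨Nat.find hexj, (Nat.find_spec hexj).1, (Nat.find_spec hexj).2,
      fun m h1 h2 h3 => Nat.find_min hexj h2 ⟨h1, h3⟩⟩
  have hd1 : ∀ m, i < m → m ≤ j →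
      ∑ k ∈ Finset.range m, f k = ∑ k ∈ Finset.range m, g k + 1 := by
    intro m h1 h2
    by_cases he : m = i + 1
    · subst he
      have := hSfs i; have := hSgs i
      have := hSeqle i le_rfl
      have := claimA (i + 1)
      omega
    · have hl : i + 1 < m := by omega
      have hne' := hjmin (m - 1) (by omega) (by omega)
      have hm' : m - 1 + 1 = m := by omega
      rw [hm'] at hne'
      have := hdomS m; have := claimA m
      omega
  have hd1j := hd1 j hij le_rfl
  have hgi : g i + 1 = f i := by
    have := hd1 (i + 1) (by omega) (by omega)
    have := hSfs i; have := hSgs i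
    have := hSeqle i le_rfl
    omega
  have hgj : g j = f j + 1 := by
    have := hSfs j; have := hSgs j
    omega
  have hgmid : ∀ l, i < l → l < j → g l = f l := by
    intro l h1 h2
    have := hd1 l h1 (by omega)
    have := hd1 (l + 1) (by omega) (by omega)
    have := hSfs l; have := hSgs l
    omega
  have hB1 : j = i + 1 → f j + 2 ≤ f i := by
    intro h
    have := hg.1 (le_of_lt hij)
    omega
  have hB2 : i + 1 < j → f (i + 1) + 1 ≤ f i := by
    intro h
    have := hgmid (i + 1) (by omega) h
    have : g (i + 1) ≤ g i := hg.1 (Nat.le_succ i)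
    omega
  have hB3 : i + 1 < j → f j + 1 ≤ f (j - 1) := by
    intro h
    have := hgmid (j - 1) (by omega) (by omega)
    have := hg.1 (show j - 1 ≤ j by omega)
    omega
  -- generic facts about moves
  have hmovP : ∀ a b, a < b → 1 ≤ f a → (∀ k, mov f a b (k + 1) ≤ mov f a b k) →
      IsPartitionOf n (mov f a b) := by
    intro a b hab ha hanti
    refine isPartitionOf_mk (N := max N0 (b + 1)) hanti ?_ ?_
    · intro m hm
      rw [mov_apply, if_neg (by omega), if_neg (by omega)]
      exact hN0f m (by omega)
    · have h1 := sum_mov f hab ha (max N0 (b + 1))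
      rw [if_pos (by omega), if_pos (by omega)] at h1
      have := hSfn (max N0 (b + 1)) (by omega)
      omega
  have hmovdom : ∀ a b, a < b → 1 ≤ f a → Dominates f (mov f a b) := by
    intro a b hab ha m
    have := sum_mov f hab ha m
    split_ifs at this <;> omega
  -- Claim B: the partial sums agree beyond j
  have hd0 : ∀ m, j < m → ∑ k ∈ Finset.range m, f k = ∑ k ∈ Finset.range m, g k := by
    by_contra hc
    push_neg at hc
    obtain ⟨m, hmj, hmne⟩ := hc
    have hanti := mov_antitone hf.1 hij hB1 hB2 hB3
    have hP := hmovP i j hij hfi1 hanti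
    have hdf := hmovdom i j hij hfi1
    have hdg : Dominates (mov f i j) g := by
      intro m'
      have hs := sum_mov f hij hfi1 m'
      rcases le_or_gt m' i with h | h
      · rw [if_neg (by omega), if_neg (by omega)] at hs
        have := hSeqle m' h
        omega
      · rcases le_or_gt m' j with h' | h'
        · rw [if_pos (by omega), if_neg (by omega)] at hs
          have := hd1 m' h h'
          omega
        · rw [if_pos (by omega), if_pos (by omega)] at hs
          have := hdomS m'
          omega
    rcases hmin _ hP hdf hdg with hEq | hEq
    · have := congrFun hEq i
      rw [mov_apply, if_neg (by omega), if_pos rfl] at this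
      omega
    · have h : ∑ k ∈ Finset.range m, mov f i j k = ∑ k ∈ Finset.range m, g k := by rw [hEq]
      have hs := sum_mov f hij hfi1 m
      rw [if_pos (by omega), if_pos (by omega)] at hs
      omega
  -- the explicit description of g
  have hgeq : ∀ k, g k = mov f i j k := by
    intro k
    rw [mov_apply]
    rcases eq_or_ne k j with rfl | hkj
    · rw [if_pos rfl]
      omega
    · rw [if_neg hkj]
      rcases eq_or_ne k i with rfl | hki
      · rw [if_pos rfl]
        omega
      · rw [if_neg hki]
        rcases lt_or_gt_of_ne hki with h | h
        · exact (hfglt k h).symm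
        · rcases lt_or_gt_of_ne hkj with h' | h'
          · exact hgmid k h h'
          · have := hd0 k (by omega)
            have := hd0 (k + 1) (by omega)
            have := hSfs k; have := hSgs k
            omega
  have hfji : f j + 2 ≤ f i := by
    have := hg.1 (le_of_lt hij)
    omega
  -- Claim C: no intermediate part is too small
  have claimC : ∀ k, i < k → k < j → f i ≤ f k + 1 := by
    by_contra hc
    push_neg at hc
    have hex : ∃ k, i < k ∧ k < j ∧ f k + 2 ≤ f i := by
      obtain ⟨k, h1, h2, h3⟩ := hc
      exact ⟨k, h1, h2, by omega⟩
    obtain ⟨c, hic, hcj, hfc, hcmin⟩ : ∃ c, i < c ∧ c < j ∧ f c + 2 ≤ f i ∧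
        ∀ m, m < c → i < m → m < j → f i ≤ f m + 1 := by
      refine ⟨Nat.find hex, (Nat.find_spec hex).1, (Nat.find_spec hex).2.1,
        (Nat.find_spec hex).2.2, fun m hmc h1 h2 => ?_⟩
      have := Nat.find_min hex hmc
      by_contra hcon
      exact this ⟨h1, h2, by omega⟩
    have hA1 : c = i + 1 → f c + 2 ≤ f i := fun _ => hfc
    have hA2 : i + 1 < c → f (i + 1) + 1 ≤ f i := fun h => hB2 (by omega)
    have hA3 : i + 1 < c → f c + 1 ≤ f (c - 1) := by
      intro h
      have := hcmin (c - 1) (by omega) (by omega) (by omega)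
      omega
    have hanti := mov_antitone hf.1 hic hA1 hA2 hA3
    have hP := hmovP i c hic hfi1 hanti
    have hdf := hmovdom i c hic hfi1
    have hdg : Dominates (mov f i c) g := by
      intro m
      have hs := sum_mov f hic hfi1 m
      rcases le_or_gt m i with h | h
      · rw [if_neg (by omega), if_neg (by omega)] at hs
        have := hSeqle m h
        omega
      · rcases le_or_gt m c with h' | h'
        · rw [if_pos (by omega), if_neg (by omega)] at hs
          have := hd1 m h (by omega)
          omega
        · rcases le_or_gt m j with h'' | h''
          · rw [if_pos (by omega), if_pos (by omega)] at hs
            have := hd1 m h h''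
            omega
          · rw [if_pos (by omega), if_pos (by omega)] at hs
            have := hd0 m h''
            omega
    rcases hmin _ hP hdf hdg with hEq | hEq
    · have := congrFun hEq i
      rw [mov_apply, if_neg (by omega), if_pos rfl] at this
      omega
    · have := congrFun hEq j
      rw [mov_apply, if_neg (by omega), if_neg (by omega)] at this
      omega
  -- Claim D: if j > i+1 then f j = f i - 2
  have claimD : i + 1 < j → f i = f j + 2 := by
    intro hij1
    by_contra hD
    have hD' : f j + 3 ≤ f i := by omega
    have hj1 : f (j - 1) + 1 = f i := by
      have := claimC (j - 1) (by omega) (by omega)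
      have := hgmid (j - 1) (by omega) (by omega)
      have := hg.1 (show i ≤ j - 1 by omega)
      omega
    have hjj : j - 1 < j := by omega
    have h1le : 1 ≤ f (j - 1) := by omega
    have hA1 : j = (j - 1) + 1 → f j + 2 ≤ f (j - 1) := by
      intro _
      omega
    have hA2 : (j - 1) + 1 < j → f ((j - 1) + 1) + 1 ≤ f (j - 1) := by
      intro h
      omega
    have hA3 : (j - 1) + 1 < j → f j + 1 ≤ f (j - 1) := by
      intro h
      omega
    have hanti := mov_antitone hf.1 hjj hA1 hA2 hA3
    have hP := hmovP (j - 1) j hjj h1le hanti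
    have hdf := hmovdom (j - 1) j hjj h1le
    have hdg : Dominates (mov f (j - 1) j) g := by
      intro m
      have hs := sum_mov f hjj h1le m
      rcases le_or_gt m i with h | h
      · rw [if_neg (by omega), if_neg (by omega)] at hs
        have := hSeqle m h
        omega
      · rcases le_or_gt m (j - 1) with h' | h'
        · rw [if_neg (by omega), if_neg (by omega)] at hs
          have := hd1 m h (by omega)
          omega
        · rcases le_or_gt m j with h'' | h''
          · rw [if_pos (by omega), if_neg (by omega)] at hs
            have := hd1 m h h''
            omega
          · rw [if_pos (by omega), if_pos (by omega)] at hs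
            have := hd0 m h''
            omega
    rcases hmin _ hP hdf hdg with hEq | hEq
    · have := congrFun hEq (j - 1)
      rw [mov_apply, if_neg (by omega), if_pos rfl] at this
      omega
    · have h := congrFun hEq i
      rw [mov_apply, if_neg (by omega), if_neg (by omega)] at h
      omega
  -- assemble
  refine ⟨i, j, hij, by omega, ?_, ?_, Equiv.refl ℕ, fun k => ?_⟩
  · intro k h1 h2
    have := claimC k h1 h2
    omega
  · rcases eq_or_lt_of_le (Nat.succ_le_of_lt hij) with he | hl
    · exact Or.inr fun l hl1 hl2 => by omega
    · exact Or.inl (by have := claimD hl; omega)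
  · simp only [Equiv.refl_apply]
    exact hgeq k
end

section
/- If applying the Gerstenhaber move to a partition λ of n (pick indices i < j with j minimal such that λ_j < λ_i - 1, assume λ_j = λ_i - 2 or λ_ℓ = λ_i for all i < ℓ < j, replace λ_i by λ_i - 1 and λ_j by λ_j + 1, and reorder) yields a partition μ, then λ covers μ in the dominance order on partitions of n. -/
/-- Two antitone functions `ℕ → ℕ` that are rearrangements of each other: `≤` half. -/
lemma antitone_perm_le (g g' : ℕ → ℕ) (hg : Antitone g) (hg' : Antitone g')
    (π : Equiv.Perm ℕ) (h : ∀ k, g k = g' (π k)) (k : ℕ) : g k ≤ g' k := by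
  by_contra hlt
  push_neg at hlt
  have hmap : ∀ l ∈ Finset.range (k+1), π l ∈ Finset.range k := by
    intro l hl
    rw [Finset.mem_range] at hl ⊢
    by_contra hge
    push_neg at hge
    have h1 : g' (π l) ≤ g' k := hg' hge
    have h2 : g k ≤ g l := hg (Nat.lt_succ_iff.mp hl)
    rw [h l] at h2
    omega
  have hcard := Finset.card_le_card_of_injOn π hmap (fun x _ y _ hxy => π.injective hxy)
  simp only [Finset.card_range] at hcard
  omega

/-- Two antitone functions `ℕ → ℕ` that are rearrangements of each other are equal. -/
lemma antitone_perm_eq (g g' : ℕ → ℕ) (hg : Antitone g) (hg' : Antitone g')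
    (π : Equiv.Perm ℕ) (h : ∀ k, g k = g' (π k)) : g = g' := by
  funext k
  refine le_antisymm (antitone_perm_le g g' hg hg' π h k)
    (antitone_perm_le g' g hg' hg π.symm (fun l => ?_) k)
  rw [h (π.symm l), Equiv.apply_symm_apply]

/-- If the Gerstenhaber move applied to a partition `λ` of `n` — pick `i < j` with `j`
minimal such that `λ j < λ i - 1`, assume `λ j = λ i - 2` or `λ ℓ = λ i` for all
`i < ℓ < j`, replace `λ i` by `λ i - 1` and `λ j` by `λ j + 1`, and reorder — yields a
partition `μ`, then `λ` covers `μ` in the dominance order on partitions of `n`. -/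
theorem stmt_14 (n : ℕ) (f g : ℕ → ℕ)
    (hf : IsPartitionOf n f) (hg : IsPartitionOf n g)
    (i j : ℕ) (hij : i < j) (hja : f j < f i - 1)
    (hjmin : ∀ k, i < k → k < j → ¬ f k < f i - 1)
    (hcond : f j = f i - 2 ∨ ∀ l, i < l → l < j → f l = f i)
    (σ : Equiv.Perm ℕ)
    (hσ : ∀ k, g k = Function.update (Function.update f i (f i - 1)) j (f j + 1) (σ k)) :
    CoversDom n f g := by
  obtain ⟨hfA, -, -⟩ := hf
  have ha2 : 2 ≤ f i := by omega
  have hPj : i < j ∧ f j < f i := ⟨hij, by omega⟩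
  have hex : ∃ m, i < m ∧ f m < f i := ⟨j, hPj⟩
  obtain ⟨m, ⟨him, hfm⟩, hmin⟩ :
      ∃ m, (i < m ∧ f m < f i) ∧ ∀ k, k < m → ¬(i < k ∧ f k < f i) :=
    ⟨Nat.find hex, Nat.find_spec hex, fun k hk => Nat.find_min hex hk⟩
  have hmj : m ≤ j := by
    by_contra hmj
    exact hmin j (by omega) hPj
  obtain ⟨p, hp1⟩ : ∃ p, p + 1 = m := ⟨m - 1, by omega⟩
  have hip : i ≤ p := by omega
  have hpj : p < j := by omega
  have fp : f p = f i := by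
    rcases eq_or_lt_of_le hip with h | h
    · rw [← h]
    · have h1 := hmin p (by omega)
      have h2 : f p ≤ f i := hfA hip
      omega
  have fmid : ∀ k, m ≤ k → k < j → f k = f i - 1 := by
    intro k hk1 hk2
    have h1 : f k ≤ f m := hfA hk1
    have h2 := hjmin k (by omega) hk2
    omega
  have fb2 : m < j → f j = f i - 2 := by
    intro hmj'
    rcases hcond with h | h
    · exact h
    · exact absurd (h m him hmj') (by omega)
  set g' : ℕ → ℕ := Function.update (Function.update f p (f i - 1)) j (f j + 1) with hg'def
  have hg'p : g' p = f i - 1 := by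
    simp [hg'def, Function.update_apply, hpj.ne]
  have hg'j : g' j = f j + 1 := by
    simp [hg'def]
  have hg'other : ∀ x, x ≠ p → x ≠ j → g' x = f x := by
    intro x hx1 hx2
    simp [hg'def, Function.update_apply, hx1, hx2]
  -- g' is antitone
  have hg'anti : Antitone g' := by
    apply antitone_nat_of_succ_le
    intro k
    have hmono : f (k+1) ≤ f k := hfA (Nat.le_succ k)
    rcases eq_or_ne (k+1) j with h1 | h1
    · rw [h1, hg'j]
      rcases eq_or_ne k p with h2 | h2
      · rw [h2, hg'p]; omega
      · rw [hg'other k h2 (by omega)]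
        have hk1 : m ≤ k := by omega
        have e1 := fmid k hk1 (by omega)
        have e2 := fb2 (by omega)
        omega
    · rcases eq_or_ne (k+1) p with h2 | h2
      · rw [h2, hg'p, hg'other k (by omega) (by omega)]
        have : f p ≤ f k := hfA (by omega)
        omega
      · rw [hg'other (k+1) h2 h1]
        rcases eq_or_ne k j with h3 | h3
        · rw [h3, hg'j]
          have : f (j+1) ≤ f j := by rw [← h3]; exact hmono
          omega
        · rcases eq_or_ne k p with h4 | h4
          · rw [h4, hg'p, hp1]
            have := fmid m (le_refl m) (by omega)
            omega
          · rw [hg'other k h4 h3]; exact hmono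
  -- g equals g'
  have hclaim : ∀ x, Function.update (Function.update f i (f i - 1)) j (f j + 1) x
      = g' (Equiv.swap i p x) := by
    intro x
    rcases eq_or_ne x i with rfl | hx1
    · rw [Equiv.swap_apply_left, hg'p,
        Function.update_of_ne (by omega), Function.update_self]
    · rcases eq_or_ne x p with rfl | hx2
      · rw [Equiv.swap_apply_right, hg'other i (fun h => hx1 h.symm) (by omega),
          Function.update_of_ne (by omega), Function.update_of_ne hx1, fp]
      · rw [Equiv.swap_apply_of_ne_of_ne hx1 hx2]
        rcases eq_or_ne x j with rfl | hx3
        · rw [hg'j, Function.update_self]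
        · rw [hg'other x hx2 hx3, Function.update_of_ne hx3, Function.update_of_ne hx1]
  have geq : g = g' := by
    refine antitone_perm_eq g g' hg.1 hg'anti (σ.trans (Equiv.swap i p)) (fun k => ?_)
    rw [Equiv.trans_apply, hσ k, hclaim (σ k)]
  -- partial sum comparisons
  have GF_low : ∀ k, k ≤ p → ∑ x ∈ Finset.range k, g' x = ∑ x ∈ Finset.range k, f x := by
    intro k hk
    refine Finset.sum_congr rfl fun x hx => ?_
    rw [Finset.mem_range] at hx
    exact hg'other x (by omega) (by omega)
  have GF_mid : ∀ k, p < k → k ≤ j →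
      (∑ x ∈ Finset.range k, g' x) + 1 = ∑ x ∈ Finset.range k, f x := by
    intro k hk1 hk2
    have hpm : p ∈ Finset.range k := Finset.mem_range.mpr hk1
    have h1 : ∑ x ∈ Finset.range k, g' x
        = ∑ x ∈ Finset.range k, Function.update f p (f i - 1) x := by
      refine Finset.sum_congr rfl fun x hx => ?_
      rw [Finset.mem_range] at hx
      rw [hg'def, Function.update_of_ne (by omega : x ≠ j)]
    rw [h1, Finset.sum_update_of_mem hpm,
      Finset.sum_eq_sum_sdiff_singleton_add hpm f, fp]
    omega
  have GF_high : ∀ k, j < k →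
      ∑ x ∈ Finset.range k, g' x = ∑ x ∈ Finset.range k, f x := by
    intro k hk
    have hjm : j ∈ Finset.range k := Finset.mem_range.mpr hk
    have hpm : p ∈ Finset.range k \ {j} := by
      simp only [Finset.mem_sdiff, Finset.mem_singleton]
      exact ⟨Finset.mem_range.mpr (by omega), by omega⟩
    rw [hg'def, Finset.sum_update_of_mem hjm, Finset.sum_update_of_mem hpm,
      Finset.sum_eq_sum_sdiff_singleton_add hjm f,
      Finset.sum_eq_sum_sdiff_singleton_add hpm f, fp]
    omega
  refine ⟨?_, ?_, ?_⟩
  · -- Dominates f g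
    intro k
    rw [geq]
    rcases le_or_gt k p with h | h
    · rw [GF_low k h]
    · rcases le_or_gt k j with h' | h'
      · have := GF_mid k h h'
        omega
      · rw [GF_high k h']
  · -- f ≠ g
    intro heq
    have := congrFun heq p
    rw [geq, hg'p] at this
    omega
  · -- cover property
    intro h hPart hfh hhg
    rw [geq] at hhg
    obtain ⟨hhA, -, -⟩ := hPart
    have hHF : ∀ k, ∑ x ∈ Finset.range k, h x ≤ ∑ x ∈ Finset.range k, f x := hfh
    obtain ⟨E, hEr⟩ : ∃ E : ℕ → ℕ, ∀ k,
        E k = (∑ x ∈ Finset.range k, f x) - (∑ x ∈ Finset.range k, h x) :=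
      ⟨_, fun k => rfl⟩
    have hE0 : ∀ k, k ≤ p → E k = 0 := by
      intro k hk
      have h1 := hhg k
      have h2 := GF_low k hk
      have h3 := hHF k
      have h4 := hEr k
      omega
    have hE0' : ∀ k, j < k → E k = 0 := by
      intro k hk
      have h1 := hhg k
      have h2 := GF_high k hk
      have h3 := hHF k
      have h4 := hEr k
      omega
    have hE1 : ∀ k, E k ≤ 1 := by
      intro k
      rcases le_or_gt k p with hk | hk
      · rw [hE0 k hk]; omega
      · rcases le_or_gt k j with hk' | hk'
        · have h1 := hhg k
          have h2 := GF_mid k hk hk'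
          have h3 := hHF k
          have h4 := hEr k
          omega
        · rw [hE0' k hk']; omega
    have hkey : ∀ k, h k + E (k+1) = f k + E k := by
      intro k
      have h1 := hHF k
      have h2 := hHF (k+1)
      have h3 := Finset.sum_range_succ f k
      have h4 := Finset.sum_range_succ h k
      have h5 := hEr k
      have h6 := hEr (k+1)
      omega
    by_cases hall : ∀ k, m ≤ k → k ≤ j → E k = E m
    · rcases Nat.le_one_iff_eq_zero_or_eq_one.mp (hE1 m) with hEm | hEm
      · -- h = f
        left
        have hEz : ∀ k, E k = 0 := by
          intro k
          rcases le_or_gt k p with hk | hk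
          · exact hE0 k hk
          · rcases le_or_gt k j with hk' | hk'
            · rw [hall k (by omega) hk', hEm]
            · exact hE0' k hk'
        funext k
        have := hkey k
        rw [hEz k, hEz (k+1)] at this
        omega
      · -- h = g'
        right
        rw [geq]
        have hEv : ∀ k, m ≤ k → k ≤ j → E k = 1 := by
          intro k hk1 hk2
          rw [hall k hk1 hk2, hEm]
        funext k
        rcases lt_or_ge k p with hk | hk
        · have := hkey k
          rw [hE0 k (by omega), hE0 (k+1) (by omega)] at this
          rw [hg'other k (by omega) (by omega)]
          omega
        · rcases eq_or_lt_of_le hk with hk' | hk'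
          · -- k = p
            have := hkey k
            rw [← hk'] at *
            rw [hE0 p (le_refl p), hEv (p+1) (by omega) (by omega)] at this
            rw [hg'p, fp] at *
            omega
          · rcases lt_or_ge k j with hk2 | hk2
            · -- m ≤ k < j
              have := hkey k
              rw [hEv k (by omega) (by omega), hEv (k+1) (by omega) (by omega)] at this
              rw [hg'other k (by omega) (by omega)]
              omega
            · rcases eq_or_lt_of_le hk2 with hk3 | hk3
              · -- k = j
                have := hkey k
                rw [← hk3] at *
                rw [hEv j (by omega) (le_refl j), hE0' (j+1) (by omega)] at this
                rw [hg'j]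
                omega
              · -- k > j
                have := hkey k
                rw [hE0' k hk3, hE0' (k+1) (by omega)] at this
                rw [hg'other k (by omega) (by omega)]
                omega
    · -- contradiction case
      exfalso
      push_neg at hall
      have hEx : ∃ k, m ≤ k ∧ k ≤ j ∧ E k ≠ E m := by
        obtain ⟨k, h1, h2, h3⟩ := hall
        exact ⟨k, h1, h2, h3⟩
      obtain ⟨k0, hk0spec, hk0min⟩ :
          ∃ k0, (m ≤ k0 ∧ k0 ≤ j ∧ E k0 ≠ E m) ∧
            ∀ l, l < k0 → ¬(m ≤ l ∧ l ≤ j ∧ E l ≠ E m) :=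
        ⟨Nat.find hEx, Nat.find_spec hEx, fun l hl => Nat.find_min hEx hl⟩
      obtain ⟨hk01, hk02, hk03⟩ := hk0spec
      have hk0m : m < k0 := by
        rcases eq_or_lt_of_le hk01 with h1 | h1
        · exact absurd (by rw [← h1]) hk03
        · exact h1
      obtain ⟨k, rfl⟩ : ∃ k, k0 = k + 1 := ⟨k0 - 1, by omega⟩
      have hEk : E k = E m := by
        have := hk0min k (by omega)
        push_neg at this
        exact this (by omega) (by omega)
      have hkm : m ≤ k := by omega
      have hkj : k < j := by omega
      have hmltj : m < j := by omega
      have hfk : f k = f i - 1 := fmid k hkm hkj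
      have hne : E k ≠ E (k+1) := by rw [hEk]; exact fun hh => hk03 hh.symm
      have hanti : h (k+1) ≤ h k := hhA (Nat.le_succ k)
      have e1 := hE1 k
      have e2 := hE1 (k+1)
      rcases (by omega : E k = 0 ∧ E (k+1) = 1 ∨ E k = 1 ∧ E (k+1) = 0) with ⟨u0, u1⟩ | ⟨u0, u1⟩
      · -- E k = 0, E (k+1) = 1
        have hhk : h k + 1 = f i - 1 := by
          have := hkey k
          rw [u0, u1, hfk] at this
          omega
        have hhk1 : f i - 1 ≤ h (k+1) := by
          have := hkey (k+1)
          rw [u1] at this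
          rcases eq_or_lt_of_le (by omega : k + 1 ≤ j) with hj1 | hj1
          · have hfj : f (k+1) = f i - 2 := by rw [hj1]; exact fb2 hmltj
            have hE2 : E (k+1+1) = 0 := hE0' _ (by omega)
            rw [hfj, hE2] at this
            omega
          · rw [fmid (k+1) (by omega) (by omega)] at this
            have := hE1 (k+1+1)
            omega
        omega
      · -- E k = 1, E (k+1) = 0
        have hhk : h k = f i := by
          have := hkey k
          rw [u0, u1, hfk] at this
          omega
        rcases eq_or_lt_of_le hkm with hkm' | hkm'
        · -- k = m, previous index is p
          have := hkey p
          rw [hp1, hkm', u0, hE0 p (le_refl p), fp] at this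
          have h2 : h k ≤ h p := hhA (by omega)
          omega
        · -- k > m
          have hkk : k - 1 + 1 = k := by omega
          have := hkey (k - 1)
          rw [hkk, u0, fmid (k-1) (by omega) (by omega)] at this
          have e3 := hE1 (k - 1)
          have h2 : h k ≤ h (k - 1) := hhA (by omega)
          omega
end

section
/- Let g be a Lie algebra, m ⊆ g an ad-nilpotent subalgebra (every a ∈ m acts nilpotently on g via ad), and χ a character of m. Then the shifted elements a - χ(a), for a ∈ m, act locally nilpotently on Q_χ = U(g)/U(g)m_χ by left multiplication. -/
/-!
For `a ∈ m`, `ad (ι a)` is a derivation of `U(g)` that restricts to the nilpotent `ad a` on the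
generators `ι g`, hence it is locally nilpotent on all of `U(g)`; it also equals `ad x` for the
shifted element `x = ι a - χ(a)`. Left multiplication by `x` is right multiplication by `x` plus
`ad x`, two commuting operators, so the binomial theorem gives
`x ^ N * u = ∑ C(N, k) • (ad x) ^ (N - k) u * x ^ k`. Once `(ad x) ^ N u = 0`, every remaining
term ends in a power `x ^ k` with `k ≥ 1` and so lies in the left ideal `U(g) m_χ`.
-/

open UniversalEnvelopingAlgebra

namespace Module.End

variable {R A : Type*} [CommRing R] [Ring A] [Algebra R A] {D : Module.End R A}

theorem pow_apply_mul_eq_zero (hD : ∀ x y, D (x * y) = D x * y + x * D y) :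
    ∀ {p q : ℕ} {x y : A}, (D ^ p) x = 0 → (D ^ q) y = 0 → (D ^ (p + q)) (x * y) = 0
  | 0, _, x, _, hx, _ => by simp_all
  | _ + 1, 0, _, y, _, hy => by simp_all
  | p + 1, q + 1, x, y, hx, hy => by
    have hDx : (D ^ p) (D x) = 0 := by rwa [← mul_apply, ← pow_succ]
    have hDy : (D ^ q) (D y) = 0 := by rwa [← mul_apply, ← pow_succ]
    rw [show p + 1 + (q + 1) = p + (q + 1) + 1 by omega, pow_succ, mul_apply, hD, map_add,
      pow_apply_mul_eq_zero hD hDx hy, zero_add, show p + (q + 1) = p + 1 + q by omega,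
      pow_apply_mul_eq_zero hD hx hDy]

theorem exists_pow_apply_eq_zero_of_adjoin_eq_top (hD : ∀ x y, D (x * y) = D x * y + x * D y)
    {s : Set A} (hs : Algebra.adjoin R s = ⊤) (hgen : ∀ x ∈ s, ∃ n, (D ^ n) x = 0) (x : A) :
    ∃ n, (D ^ n) x = 0 := by
  have hD_one : D 1 = 0 := by simpa using hD 1 1
  induction (hs ▸ Algebra.mem_top : x ∈ Algebra.adjoin R s) using Algebra.adjoin_induction with
  | mem x hx => exact hgen x hx
  | algebraMap r => exact ⟨1, by simp [Algebra.algebraMap_eq_smul_one, hD_one]⟩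
  | add x y _ _ hx hy =>
    obtain ⟨p, hp⟩ := hx
    obtain ⟨q, hq⟩ := hy
    exact ⟨max p q, by rw [map_add, pow_map_zero_of_le (le_max_left p q) hp,
      pow_map_zero_of_le (le_max_right p q) hq, add_zero]⟩
  | mul x y _ _ hx hy =>
    obtain ⟨p, hp⟩ := hx
    obtain ⟨q, hq⟩ := hy
    exact ⟨p + q, pow_apply_mul_eq_zero hD hp hq⟩

end Module.End

namespace LieAlgebra

attribute [local instance] LieRing.ofAssociativeRing

variable {R A : Type*} [CommRing R] [Ring A] [Algebra R A]

theorem ad_apply_mul (c x y : A) : ad R A c (x * y) = ad R A c x * y + x * ad R A c y := by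
  simp only [ad_apply, Ring.lie_def]
  noncomm_ring

theorem ad_sub_algebraMap (c : A) (r : R) : ad R A (c - algebraMap R A r) = ad R A c := by
  ext x
  simp [Ring.lie_def, Algebra.commutes]

theorem pow_mul_mem_of_ad_pow_apply_eq_zero {I : Submodule A A} {x u : A} (hx : x ∈ I) {n : ℕ}
    (hu : (ad R A x ^ n) u = 0) : x ^ n * u ∈ I := by
  have hsplit : LinearMap.mulLeft R x = LinearMap.mulRight R x + ad R A x := by
    rw [ad_eq_lmul_left_sub_lmul_right, Pi.sub_apply]; abel
  have hcomm : Commute (LinearMap.mulRight R x) (ad R A x) := by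
    rw [ad_eq_lmul_left_sub_lmul_right]
    exact ((LinearMap.commute_mulLeft_right x x).sub_left (Commute.refl _)).symm
  have hexpand :
      x ^ n * u = ∑ k ∈ Finset.range (n + 1), n.choose k • ((ad R A x ^ (n - k)) u * x ^ k) := by
    rw [← LinearMap.mulLeft_apply (R := R), ← LinearMap.pow_mulLeft, hsplit, hcomm.add_pow,
      LinearMap.sum_apply]
    refine Finset.sum_congr rfl fun k _ => ?_
    rw [Module.End.mul_apply, Module.End.mul_apply, Module.End.natCast_apply,
      map_nsmul, map_nsmul, LinearMap.pow_mulRight, LinearMap.mulRight_apply]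
  rw [hexpand]
  refine Submodule.sum_mem I fun k _ => nsmul_mem ?_ _
  rcases k with _ | k
  · simp [hu]
  · rw [pow_succ, ← mul_assoc]
    exact I.smul_mem _ hx

end LieAlgebra

theorem LieHom.ad_pow_map_apply {R L L' : Type*} [CommRing R] [LieRing L] [LieAlgebra R L]
    [LieRing L'] [LieAlgebra R L'] (f : L →ₗ⁅R⁆ L') (x y : L) (n : ℕ) :
    (LieAlgebra.ad R L' (f x) ^ n) (f y) = f ((LieAlgebra.ad R L x ^ n) y) := by
  induction n with
  | zero => rfl
  | succ n ih =>
    simp only [pow_succ', Module.End.mul_apply, ih, LieAlgebra.ad_apply, LieHom.map_lie]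

theorem UniversalEnvelopingAlgebra.adjoin_range_ι (R L : Type*) [CommRing R] [LieRing L]
    [LieAlgebra R L] :
    Algebra.adjoin R (Set.range (ι R : L → UniversalEnvelopingAlgebra R L)) = ⊤ := by
  have hι : (ι R : L → UniversalEnvelopingAlgebra R L) = mkAlgHom R L ∘ TensorAlgebra.ι R := rfl
  rw [hι, Set.range_comp, ← AlgHom.map_adjoin, TensorAlgebra.adjoin_range_ι, Algebra.map_top,
    AlgHom.range_eq_top]
  exact RingCon.mkₐ_surjective _

theorem stmt_19_general {K L : Type*} [Field K] [LieRing L] [LieAlgebra K L]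
    (m : LieSubalgebra K L)
    (hnil : ∀ a : m, IsNilpotent (LieAlgebra.ad K L (a : L)))
    (χ : m →ₗ[K] K)
    (I : Submodule (UniversalEnvelopingAlgebra K L) (UniversalEnvelopingAlgebra K L))
    (hI : I = Submodule.span (UniversalEnvelopingAlgebra K L)
      (Set.range fun a : m =>
        (ι K (a : L) : UniversalEnvelopingAlgebra K L)
          - algebraMap K (UniversalEnvelopingAlgebra K L) (χ a)))
    (v : UniversalEnvelopingAlgebra K L ⧸ I) (a : m) :
    ∃ N : ℕ,
      ((ι K (a : L) - algebraMap K (UniversalEnvelopingAlgebra K L) (χ a)) ^ N) • v = 0 := by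
  obtain ⟨u, rfl⟩ := Submodule.Quotient.mk_surjective I v
  simp only [← Submodule.Quotient.mk_smul, smul_eq_mul, Submodule.Quotient.mk_eq_zero]
  let _ : LieRing (UniversalEnvelopingAlgebra K L) := LieRing.ofAssociativeRing
  have hmem : ι K (a : L) - algebraMap K _ (χ a) ∈ I := hI ▸ Submodule.subset_span ⟨a, rfl⟩
  obtain ⟨M, hM⟩ := hnil a
  have hgen : ∀ w ∈ Set.range (ι K : L → UniversalEnvelopingAlgebra K L),
      ∃ n, (LieAlgebra.ad K _ (ι K (a : L)) ^ n) w = 0 := by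
    rintro _ ⟨y, rfl⟩
    exact ⟨M, by rw [LieHom.ad_pow_map_apply, hM, LinearMap.zero_apply, map_zero]⟩
  obtain ⟨N, hN⟩ := Module.End.exists_pow_apply_eq_zero_of_adjoin_eq_top
    (LieAlgebra.ad_apply_mul _) (adjoin_range_ι K L) hgen u
  exact ⟨N, LieAlgebra.pow_mul_mem_of_ad_pow_apply_eq_zero hmem
    (by rwa [LieAlgebra.ad_sub_algebraMap])⟩

/-- Let `m` be an ad-nilpotent Lie subalgebra of `g` with character `χ`, and let
`Q_χ = U(g)/U(g)·m_χ` be the generalized Gelfand–Graev module. Then each shifted element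
`a - χ(a)`, `a ∈ m`, acts locally nilpotently on `Q_χ` by left multiplication. -/
theorem stmt_19 {K L : Type*} [Field K] [CharZero K] [LieRing L] [LieAlgebra K L]
    (m : LieSubalgebra K L)
    (hnil : ∀ a : m, IsNilpotent (LieAlgebra.ad K L (a : L)))
    (χ : m →ₗ[K] K) (hχ : ∀ a b : m, χ ⁅a, b⁆ = 0)
    (I : Submodule (UniversalEnvelopingAlgebra K L) (UniversalEnvelopingAlgebra K L))
    (hI : I = Submodule.span (UniversalEnvelopingAlgebra K L)
      (Set.range fun a : m =>
        (ι K (a : L) : UniversalEnvelopingAlgebra K L)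
          - algebraMap K (UniversalEnvelopingAlgebra K L) (χ a)))
    (v : UniversalEnvelopingAlgebra K L ⧸ I) (a : m) :
    ∃ N : ℕ,
      ((ι K (a : L) - algebraMap K (UniversalEnvelopingAlgebra K L) (χ a)) ^ N) • v = 0 :=
  stmt_19_general m hnil χ I hI v a
end
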